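/- arXiv:1311.2367 — 7 statements merged into one kernel-verified Lean document; each statement's English description precedes it below -/
import Mathlib

section
/- Let f : E → ℝ ∪ {+∞} be proper with x̄ ∈ dom f, where E is a finite-dimensional Euclidean space. Suppose that for every nonzero direction u ∈ E either d₋¹f(x̄; u) > 0, or there exists a positive integer n = n(u) ≥ 2 such that 0 ∈ ∂₋ⁱf(x̄; 0,…,0) for all i = 1,…,n−1 and d₋ⁿf(x̄; 0,…,0; u) > 0. Then x̄ is a strict local minimizer of f. -/
/-! A positive lower Hadamard derivative of any order with zero parameters at `u` already forces
`f (x̄ + t u') > f x̄` for all small `t > 0` and all `u'` near `u`. By compactness of the unit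
sphere the threshold on `t` can be chosen uniformly in the direction, and every `y ≠ x̄` close to
`x̄` is `x̄ + t v` with `t = ‖y - x̄‖` small and `v` a unit vector. -/

open Filter Topology

/-- The space of continuous `m`-linear forms `L^m(E)`. -/
abbrev MForm (E : Type*) [NormedAddCommGroup E] [InnerProductSpace ℝ E] (m : ℕ) : Type _ :=
  ContinuousMultilinearMap ℝ (fun _ : Fin m => E) ℝ

/-- A tuple of multilinear forms `(x₁*, …, x_k*)`, where `x_i*` is an `i`-linear form. -/
abbrev FormTuple (E : Type*) [NormedAddCommGroup E] [InnerProductSpace ℝ E] (k : ℕ) : Type _ :=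
  ∀ i : Fin k, MForm E (i.1 + 1)

/-- Restriction of a tuple of forms to its first `m` entries. -/
def FormTuple.restrict {E : Type*} [NormedAddCommGroup E] [InnerProductSpace ℝ E] {k : ℕ}
    (xs : FormTuple E k) (m : ℕ) (h : m ≤ k) : FormTuple E m :=
  fun j => xs ⟨j.1, lt_of_lt_of_le j.2 h⟩

/-- The lower Hadamard directional derivative of order `k + 1` of `f` at `x`
with parameters `xs = (x₁*, …, x_k*)` in direction `u`:
`liminf_{t↓0, u'→u} (k+1)!/t^(k+1) * (f (x + t u') - f x - ∑_{i=1}^{k} t^i/i! · x_i*(u',…,u'))`. -/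
noncomputable def hadamardDeriv {E : Type*} [NormedAddCommGroup E] [InnerProductSpace ℝ E]
    (f : E → EReal) (x : E) (k : ℕ) (xs : FormTuple E k) (u : E) : EReal :=
  Filter.liminf
    (fun p : ℝ × E =>
      (((Nat.factorial (k + 1) : ℝ) / p.1 ^ (k + 1) : ℝ) : EReal) *
        (f (x + p.1 • p.2) - f x -
          ((∑ i : Fin k, p.1 ^ (i.1 + 1) / (Nat.factorial (i.1 + 1)) * xs i (fun _ => p.2) : ℝ) :
            EReal)))
    ((𝓝[>] (0 : ℝ)) ×ˢ 𝓝 u)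

/-- The lower Hadamard subdifferential of order `k + 1` of `f` at `x`
with parameters `xs = (x₁*, …, x_k*)`. -/
def hadamardSubdiff {E : Type*} [NormedAddCommGroup E] [InnerProductSpace ℝ E]
    (f : E → EReal) (x : E) (k : ℕ) (xs : FormTuple E k) : Set (MForm E (k + 1)) :=
  {y | ∀ u : E, ((y (fun _ => u) : ℝ) : EReal) ≤ hadamardDeriv f x k xs u}

theorem eventually_nhdsNE_of_forall_directional {E : Type*} [NormedAddCommGroup E]
    [NormedSpace ℝ E] [ProperSpace E] {P : E → Prop} {x : E}
    (h : ∀ u : E, u ≠ 0 → ∀ᶠ p : ℝ × E in 𝓝[>] 0 ×ˢ 𝓝 u, P (x + p.1 • p.2)) :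
    ∀ᶠ y in 𝓝[≠] x, P y := by
  have hsphere : ∀ᶠ p : ℝ × E in 𝓝[>] 0 ×ˢ 𝓝ˢ (Metric.sphere 0 1), P (x + p.1 • p.2) :=
    (isCompact_sphere 0 1).mem_prod_nhdsSet_of_forall fun u hu =>
      h u (ne_zero_of_mem_sphere one_ne_zero ⟨u, hu⟩)
  obtain ⟨s, hs, S, hS, hsS⟩ := mem_prod_iff.1 hsphere
  obtain ⟨ε, hε, hIoc⟩ := mem_nhdsGT_iff_exists_Ioc_subset.1 hs
  filter_upwards [inter_mem_nhdsWithin _ (Metric.ball_mem_nhds x hε)] with y ⟨hyx, hy⟩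
  have hr : 0 < ‖y - x‖ := norm_pos_iff.2 (sub_ne_zero.2 hyx)
  have hv : ‖y - x‖⁻¹ • (y - x) ∈ Metric.sphere (0 : E) 1 := by
    rw [mem_sphere_zero_iff_norm, norm_smul, norm_inv, norm_norm, inv_mul_cancel₀ hr.ne']
  have hP : P (x + ‖y - x‖ • ‖y - x‖⁻¹ • (y - x)) :=
    hsS (a := (_, _)) ⟨hIoc ⟨hr, (mem_ball_iff_norm.1 hy).le⟩, subset_of_mem_nhdsSet hS hv⟩
  rwa [smul_smul, mul_inv_cancel₀ hr.ne', one_smul, add_sub_cancel] at hP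

theorem eventually_lt_of_hadamardDeriv_pos {E : Type*} [NormedAddCommGroup E]
    [InnerProductSpace ℝ E] {f : E → EReal} {x u : E} {k : ℕ}
    (h : 0 < hadamardDeriv f x k (fun _ => 0) u) :
    ∀ᶠ p : ℝ × E in 𝓝[>] 0 ×ˢ 𝓝 u, f x < f (x + p.1 • p.2) := by
  filter_upwards [eventually_lt_of_lt_liminf h,
    (eventually_mem_nhdsWithin (a := (0 : ℝ))).prod_inl (𝓝 u)] with p hp ht
  simp only [zero_apply, mul_zero, Finset.sum_const_zero, EReal.coe_zero, sub_zero] at hp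
  contrapose! hp
  have hc : (0 : ℝ) ≤ (k + 1).factorial / p.1 ^ (k + 1) := by
    have : (0 : ℝ) < p.1 := ht
    positivity
  exact mul_nonpos_of_nonneg_of_nonpos (EReal.coe_nonneg.2 hc) (EReal.sub_nonpos.2 hp)

theorem stmt_4_general {E : Type*} [NormedAddCommGroup E] [InnerProductSpace ℝ E]
    [FiniteDimensional ℝ E] (f : E → EReal)
    (xbar : E)
    (h : ∀ u : E, u ≠ 0 →
      0 < hadamardDeriv f xbar 0 (fun _ => 0) u ∨
        ∃ k : ℕ, 1 ≤ k ∧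
          (∀ j < k, (0 : MForm E (j + 1)) ∈ hadamardSubdiff f xbar j (fun _ => 0)) ∧
          0 < hadamardDeriv f xbar k (fun _ => 0) u) :
    ∀ᶠ y in 𝓝[≠] xbar, f xbar < f y := by
  refine eventually_nhdsNE_of_forall_directional fun u hu => ?_
  obtain ⟨k, hk⟩ : ∃ k : ℕ, 0 < hadamardDeriv f xbar k (fun _ => 0) u := by
    rcases h u hu with h₀ | ⟨k, -, -, hk⟩
    exacts [⟨0, h₀⟩, ⟨k, hk⟩]
  exact eventually_lt_of_hadamardDeriv_pos hk

/-- if for every nonzero direction `u` either the first-order lower Hadamard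
derivative is positive, or there is an order `n = k + 1 ≥ 2` such that `0` lies in all the
lower Hadamard subdifferentials of order `i = 1, …, n - 1` with zero parameters and the
`n`-th order derivative at `u` is positive, then `xbar` is a strict local minimizer. -/
theorem stmt_4 {E : Type*} [NormedAddCommGroup E] [InnerProductSpace ℝ E]
    [FiniteDimensional ℝ E] (f : E → EReal)
    (hbot : ∀ y, f y ≠ ⊥) (xbar : E) (hdom : f xbar ≠ ⊤)
    (h : ∀ u : E, u ≠ 0 →
      0 < hadamardDeriv f xbar 0 (fun _ => 0) u ∨
        ∃ k : ℕ, 1 ≤ k ∧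
          (∀ j < k, (0 : MForm E (j + 1)) ∈ hadamardSubdiff f xbar j (fun _ => 0)) ∧
          0 < hadamardDeriv f xbar k (fun _ => 0) u) :
    ∀ᶠ y in 𝓝[≠] xbar, f xbar < f y :=
  stmt_4_general f xbar h
end

section
/- Let f : E → ℝ ∪ {+∞} be proper, x̄ ∈ dom f, and n ≥ 2 an integer. Then x̄ is an isolated local minimizer of order n (i.e., there exist a neighborhood N of x̄ and C > 0 with f(x) ≥ f(x̄) + C‖x − x̄‖ⁿ for all x ∈ N) if and only if 0 ∈ ∂₋ⁱf(x̄; 0,…,0) for all i = 1,…,n−1 and d₋ⁿf(x̄; 0,…,0; u) > 0 for every u ∈ E \ {0}. -/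
open Filter Topology

/-!
Write `y = x + t v` with `t = ‖y - x‖` and `‖v‖ = 1`. Growth of order `n` says exactly that
the quotients `n!/tⁿ (f (x + t v) - f x)` stay above `n! C ‖v‖ⁿ`; with `C = 0` this gives the
lower-order conditions, and with `C > 0` the positive `n`-th derivative. Conversely, if growth
fails for every `C = 1/(m+1)`, the unit directions of the offending points have a cluster
point `u` by compactness of the sphere, and along that subsequence the quotients are at most
`n!/(m+1)`, so the `n`-th derivative in direction `u` is `≤ 0`.
-/

namespace EReal

theorem coe_mul_le_mul_sub_coe_iff {m : ℝ} (hm : 0 < m) (r c : ℝ) (a : EReal) :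
    ((m * c : ℝ) : EReal) ≤ m * (a - r) ↔ ((r + c : ℝ) : EReal) ≤ a := by
  induction a with
  | bot => simp [coe_mul_bot_of_pos hm, -coe_mul]
  | coe a =>
    rw [← coe_sub, ← coe_mul, EReal.coe_le_coe_iff, EReal.coe_le_coe_iff,
      mul_le_mul_iff_right₀ hm]
    constructor <;> intro h <;> linarith
  | top => simp [coe_mul_top_of_pos hm]

theorem mul_sub_coe_le_coe_mul_iff {m : ℝ} (hm : 0 < m) (r c : ℝ) (a : EReal) :
    (m : EReal) * (a - r) ≤ ((m * c : ℝ) : EReal) ↔ a ≤ ((r + c : ℝ) : EReal) := by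
  induction a with
  | bot => simp [coe_mul_bot_of_pos hm, -coe_mul]
  | coe a =>
    rw [← coe_sub, ← coe_mul, EReal.coe_le_coe_iff, EReal.coe_le_coe_iff,
      mul_le_mul_iff_right₀ hm]
    constructor <;> intro h <;> linarith
  | top => simp [coe_mul_top_of_pos hm, -coe_mul, -coe_add]

end EReal

open scoped Nat

section

variable {E : Type*} [NormedAddCommGroup E] [NormedSpace ℝ E]

noncomputable def hadamardQuotient (f : E → EReal) (x : E) (n : ℕ) (p : ℝ × E) : EReal :=
  (((n ! : ℝ) / p.1 ^ n : ℝ) : EReal) * (f (x + p.1 • p.2) - f x)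

variable {f : E → EReal} {x : E} {r : ℝ}

theorem coe_le_hadamardQuotient_iff (hx : f x = r) (n : ℕ) {t : ℝ} (ht : 0 < t) (v : E)
    (c : ℝ) :
    (((n ! : ℝ) / t ^ n * c : ℝ) : EReal) ≤ hadamardQuotient f x n (t, v) ↔
      f x + (c : EReal) ≤ f (x + t • v) := by
  rw [hadamardQuotient, hx, EReal.coe_mul_le_mul_sub_coe_iff (by positivity), EReal.coe_add]

theorem hadamardQuotient_le_coe_iff (hx : f x = r) (n : ℕ) {t : ℝ} (ht : 0 < t) (v : E)
    (c : ℝ) :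
    hadamardQuotient f x n (t, v) ≤ (((n ! : ℝ) / t ^ n * c : ℝ) : EReal) ↔
      f (x + t • v) ≤ f x + (c : EReal) := by
  rw [hadamardQuotient, hx, EReal.mul_sub_coe_le_coe_mul_iff (by positivity), EReal.coe_add]

theorem tendsto_add_smul_nhdsGT_prod (x u : E) :
    Tendsto (fun p : ℝ × E => x + p.1 • p.2) (𝓝[>] 0 ×ˢ 𝓝 u) (𝓝 x) := by
  have : Tendsto (fun p : ℝ × E => x + p.1 • p.2) (𝓝 (0, u)) (𝓝 (x + (0 : ℝ) • u)) :=
    (continuous_const.add (continuous_fst.smul continuous_snd)).tendsto _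
  rw [zero_smul, add_zero, nhds_prod_eq] at this
  exact this.mono_left (prod_mono_left _ nhdsWithin_le_nhds)

theorem coe_le_liminf_hadamardQuotient (hx : f x = r) {n : ℕ} {C : ℝ}
    (hC : ∀ᶠ y in 𝓝 x, f x + ((C * ‖y - x‖ ^ n : ℝ) : EReal) ≤ f y) (u : E) :
    (((n ! : ℝ) * C * ‖u‖ ^ n : ℝ) : EReal) ≤
      liminf (hadamardQuotient f x n) (𝓝[>] 0 ×ˢ 𝓝 u) := by
  have hlim : Tendsto (fun p : ℝ × E => (((n ! : ℝ) * C * ‖p.2‖ ^ n : ℝ) : EReal))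
      (𝓝[>] 0 ×ˢ 𝓝 u) (𝓝 (((n ! : ℝ) * C * ‖u‖ ^ n : ℝ) : EReal)) :=
    (continuous_coe_real_ereal.tendsto _).comp <|
      (((continuous_norm.pow n).tendsto u).const_mul _).comp tendsto_snd
  rw [← hlim.liminf_eq]
  refine liminf_le_liminf ?_
  filter_upwards [eventually_mem_nhdsWithin.prod_inl (𝓝 u),
    (tendsto_add_smul_nhdsGT_prod x u).eventually hC] with ⟨t, v⟩ (ht : 0 < t) hgrowth
  have hquot : (n ! : ℝ) * C * ‖v‖ ^ n = (n ! : ℝ) / t ^ n * (C * ‖t • v‖ ^ n) := by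
    rw [norm_smul, Real.norm_of_nonneg ht.le]
    field_simp
    ring
  rw [hquot, coe_le_hadamardQuotient_iff hx n ht]
  simpa only [add_sub_cancel_left] using hgrowth

theorem zero_le_liminf_hadamardQuotient (hx : f x = r) (hmin : IsLocalMin f x) (n : ℕ)
    (u : E) : 0 ≤ liminf (hadamardQuotient f x n) (𝓝[>] 0 ×ˢ 𝓝 u) := by
  simpa using
    coe_le_liminf_hadamardQuotient hx (n := n) (C := 0) (hmin.mono fun y hy => by simpa using hy) u

theorem exists_subseq_tendsto_polar [FiniteDimensional ℝ E] {y : ℕ → E} (hne : ∀ m, y m ≠ x)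
    (hy : Tendsto y atTop (𝓝 x)) :
    ∃ u : E, ‖u‖ = 1 ∧ ∃ ψ : ℕ → ℕ, StrictMono ψ ∧
      Tendsto (fun m => (‖y (ψ m) - x‖, ‖y (ψ m) - x‖⁻¹ • (y (ψ m) - x))) atTop
        (𝓝[>] 0 ×ˢ 𝓝 u) := by
  have hpos : ∀ m, 0 < ‖y m - x‖ := fun m => norm_pos_iff.2 (sub_ne_zero.2 (hne m))
  have hsphere : ∀ m, ‖y m - x‖⁻¹ • (y m - x) ∈ Metric.sphere (0 : E) 1 := fun m => by
    rw [mem_sphere_zero_iff_norm, norm_smul, norm_inv, norm_norm, inv_mul_cancel₀ (hpos m).ne']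
  obtain ⟨u, hu, ψ, hψ, hdir⟩ := (isCompact_sphere (0 : E) 1).tendsto_subseq hsphere
  refine ⟨u, mem_sphere_zero_iff_norm.1 hu, ψ, hψ, Tendsto.prodMk ?_ hdir⟩
  refine tendsto_nhdsWithin_iff.2 ⟨?_, Eventually.of_forall fun m => hpos (ψ m)⟩
  exact (tendsto_iff_norm_sub_tendsto_zero.1 hy).comp hψ.tendsto_atTop

theorem exists_growth_of_liminf_hadamardQuotient_pos [FiniteDimensional ℝ E] (hx : f x = r)
    {n : ℕ} (hn : n ≠ 0) (hpos : ∀ u ≠ 0, 0 < liminf (hadamardQuotient f x n) (𝓝[>] 0 ×ˢ 𝓝 u)) :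
    ∃ C > (0 : ℝ), ∀ᶠ y in 𝓝 x, f x + ((C * ‖y - x‖ ^ n : ℝ) : EReal) ≤ f y := by
  by_contra! hfail
  have hseq : ∀ m : ℕ, ∃ y, dist y x < 1 / (m + 1) ∧
      f y < f x + ((1 / (m + 1) * ‖y - x‖ ^ n : ℝ) : EReal) := fun m =>
    ((hfail _ (by positivity)).and_eventually
      (Metric.ball_mem_nhds x (by positivity : (0 : ℝ) < 1 / (m + 1)))).exists.imp
      fun y hy => ⟨hy.2, hy.1⟩
  choose y hy_dist hy_lt using hseq
  have hne : ∀ m, y m ≠ x := fun m h => by simpa [h, hn] using hy_lt m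
  have hy : Tendsto y atTop (𝓝 x) := tendsto_iff_dist_tendsto_zero.2 <|
    squeeze_zero (fun _ => dist_nonneg) (fun m => (hy_dist m).le)
      tendsto_one_div_add_atTop_nhds_zero_nat
  obtain ⟨u, hu, ψ, hψ, hpolar⟩ := exists_subseq_tendsto_polar hne hy
  set p : ℕ → ℝ × E := fun m => (‖y (ψ m) - x‖, ‖y (ψ m) - x‖⁻¹ • (y (ψ m) - x))
  have hbound : ∀ m,
      hadamardQuotient f x n (p m) ≤ (((n ! : ℝ) * (1 / (ψ m + 1)) : ℝ) : EReal) := by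
    intro m
    have ht : 0 < ‖y (ψ m) - x‖ := norm_pos_iff.2 (sub_ne_zero.2 (hne _))
    have hquot : (n ! : ℝ) * (1 / (ψ m + 1)) =
        (n ! : ℝ) / ‖y (ψ m) - x‖ ^ n * (1 / (ψ m + 1) * ‖y (ψ m) - x‖ ^ n) := by
      field_simp
    rw [hquot, hadamardQuotient_le_coe_iff hx n ht, smul_inv_smul₀ ht.ne', add_sub_cancel]
    exact (hy_lt _).le
  have hbound_lim : Tendsto (fun m => (((n ! : ℝ) * (1 / (ψ m + 1)) : ℝ) : EReal)) atTop
      (𝓝 ((0 : ℝ) : EReal)) := EReal.tendsto_coe.2 <| by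
    simpa using (tendsto_one_div_add_atTop_nhds_zero_nat.comp hψ.tendsto_atTop).const_mul
      (n ! : ℝ)
  have : liminf (hadamardQuotient f x n) (𝓝[>] 0 ×ˢ 𝓝 u) ≤ 0 :=
    calc liminf (hadamardQuotient f x n) (𝓝[>] 0 ×ˢ 𝓝 u)
        ≤ liminf (hadamardQuotient f x n ∘ p) atTop := hpolar.liminf_le_liminf_comp
      _ ≤ liminf (fun m => (((n ! : ℝ) * (1 / (ψ m + 1)) : ℝ) : EReal)) atTop :=
          liminf_le_liminf (Eventually.of_forall hbound)
      _ = 0 := by rw [hbound_lim.liminf_eq, EReal.coe_zero]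
  exact (hpos u (norm_ne_zero_iff.1 (hu ▸ one_ne_zero))).not_ge this

end

theorem hadamardDeriv_zero_eq_liminf {E : Type*} [NormedAddCommGroup E] [InnerProductSpace ℝ E]
    (f : E → EReal) (x : E) (k : ℕ) (u : E) :
    hadamardDeriv f x k (fun _ => 0) u =
      liminf (hadamardQuotient f x (k + 1)) (𝓝[>] 0 ×ˢ 𝓝 u) := by
  simp only [hadamardDeriv, zero_apply, mul_zero,
    Finset.sum_const_zero, EReal.coe_zero, sub_zero]
  rfl

theorem zero_mem_hadamardSubdiff_zero_iff {E : Type*} [NormedAddCommGroup E]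
    [InnerProductSpace ℝ E] (f : E → EReal) (x : E) (k : ℕ) :
    (0 : MForm E (k + 1)) ∈ hadamardSubdiff f x k (fun _ => 0) ↔
      ∀ u, 0 ≤ liminf (hadamardQuotient f x (k + 1)) (𝓝[>] 0 ×ˢ 𝓝 u) := by
  simp [hadamardSubdiff, hadamardDeriv_zero_eq_liminf]

theorem stmt_5_general {E : Type*} [NormedAddCommGroup E] [InnerProductSpace ℝ E]
    [FiniteDimensional ℝ E] (f : E → EReal)
    (hbot : ∀ y, f y ≠ ⊥) (xbar : E) (hdom : f xbar ≠ ⊤) (k : ℕ) :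
    (∃ C > (0 : ℝ), ∀ᶠ y in 𝓝 xbar,
        f xbar + ((C * ‖y - xbar‖ ^ (k + 1) : ℝ) : EReal) ≤ f y) ↔
      (∀ j < k, (0 : MForm E (j + 1)) ∈ hadamardSubdiff f xbar j (fun _ => 0)) ∧
        ∀ u : E, u ≠ 0 → 0 < hadamardDeriv f xbar k (fun _ => 0) u := by
  have hr : f xbar = ((f xbar).toReal : EReal) := (EReal.coe_toReal hdom (hbot xbar)).symm
  simp_rw [zero_mem_hadamardSubdiff_zero_iff, hadamardDeriv_zero_eq_liminf]
  constructor
  · rintro ⟨C, hC, hgrowth⟩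
    have hmin : IsLocalMin f xbar := hgrowth.mono fun y hy =>
      le_trans (le_add_of_nonneg_right (EReal.coe_nonneg.2 (by positivity))) hy
    refine ⟨fun j _ => zero_le_liminf_hadamardQuotient hr hmin (j + 1), fun u hu => ?_⟩
    refine lt_of_lt_of_le ?_ (coe_le_liminf_hadamardQuotient hr hgrowth u)
    exact EReal.coe_pos.2 (by positivity)
  · rintro ⟨-, hpos⟩
    exact exists_growth_of_liminf_hadamardQuotient_pos hr k.succ_ne_zero hpos

/-- `xbar` is an isolated local minimizer of order `n = k + 1 ≥ 2` if and
only if `0` lies in the lower Hadamard subdifferentials of orders `1, …, n - 1` with zero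
parameters and the `n`-th order lower Hadamard derivative is positive in every nonzero
direction. -/
theorem stmt_5 {E : Type*} [NormedAddCommGroup E] [InnerProductSpace ℝ E]
    [FiniteDimensional ℝ E] (f : E → EReal)
    (hbot : ∀ y, f y ≠ ⊥) (xbar : E) (hdom : f xbar ≠ ⊤) (k : ℕ) (hk : 1 ≤ k) :
    (∃ C > (0 : ℝ), ∀ᶠ y in 𝓝 xbar,
        f xbar + ((C * ‖y - xbar‖ ^ (k + 1) : ℝ) : EReal) ≤ f y) ↔
      (∀ j < k, (0 : MForm E (j + 1)) ∈ hadamardSubdiff f xbar j (fun _ => 0)) ∧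
        ∀ u : E, u ≠ 0 → 0 < hadamardDeriv f xbar k (fun _ => 0) u :=
  stmt_5_general f hbot xbar hdom k
end

section
/- For the function f : ℝ → ℝ defined by f(x) = −exp(−1/x²) for x ≠ 0 and f(0) = 0, all lower Hadamard derivatives of every order n at x̄ = 0 with zero intermediate parameters vanish: d₋ⁿf(0; 0,…,0; u) = 0 for all u ∈ ℝ and all positive integers n, yet 0 is not a local minimizer of f (indeed f(x) < f(0) for all x ≠ 0). -/
open Filter Topology

/-- The function `f x = -exp (-1 / x²)` for `x ≠ 0`, `f 0 = 0`, as an extended real valued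
function. -/
noncomputable def fEx2 : ℝ → EReal := fun x =>
  ((if x = 0 then (0 : ℝ) else -Real.exp (-1 / x ^ 2) : ℝ) : EReal)

/-!
`fEx2 x = -g (x²)` with `g` Mathlib's `expNegInvGlue` (`g s = exp (-1/s)` for `s > 0`, `0` otherwise).
Since `g` vanishes at `0` faster than any power, `t⁻ⁿ · g (t² u'²)` tends to `0` as `t ↓ 0`,
uniformly for `u'` near `u`; with zero intermediate parameters the Hadamard quotients are exactly
these, so every lower Hadamard derivative vanishes. Yet `g (x²) > 0` for `x ≠ 0`, so `0` is a
strict global maximiser, not a local minimiser.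
-/

section HadamardDeriv

variable {E : Type*} [NormedAddCommGroup E] [InnerProductSpace ℝ E]

theorem hadamardDeriv_coe_zero_eq_liminf (f : E → ℝ) (x : E) (k : ℕ) (u : E) :
    hadamardDeriv (fun y => (f y : EReal)) x k (fun _ => 0) u =
      liminf (fun p : ℝ × E =>
          (((k + 1).factorial / p.1 ^ (k + 1) * (f (x + p.1 • p.2) - f x) : ℝ) : EReal))
        ((𝓝[>] (0 : ℝ)) ×ˢ 𝓝 u) := by
  simp only [hadamardDeriv, zero_apply, mul_zero,
    Finset.sum_const_zero, EReal.coe_zero, sub_zero, ← EReal.coe_sub, ← EReal.coe_mul]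

theorem hadamardDeriv_coe_zero_of_tendsto {f : E → ℝ} {x : E} {k : ℕ} {u : E} {c : ℝ}
    (h : Tendsto (fun p : ℝ × E => (k + 1).factorial / p.1 ^ (k + 1) * (f (x + p.1 • p.2) - f x))
      ((𝓝[>] (0 : ℝ)) ×ˢ 𝓝 u) (𝓝 c)) :
    hadamardDeriv (fun y => (f y : EReal)) x k (fun _ => 0) u = c := by
  rw [hadamardDeriv_coe_zero_eq_liminf]
  exact (EReal.tendsto_coe.2 h).liminf_eq

end HadamardDeriv

theorem not_isLocalMin_of_forall_lt {X β : Type*} [TopologicalSpace X] [Preorder β] {f : X → β}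
    {a : X} [(𝓝[≠] a).NeBot] (h : ∀ x, x ≠ a → f x < f a) : ¬IsLocalMin f a := fun hmin =>
  let ⟨x, hax, hx⟩ :=
    ((hmin.filter_mono nhdsWithin_le_nhds).and (self_mem_nhdsWithin (s := {a}ᶜ))).exists
  (h x hx).not_ge hax

namespace expNegInvGlue

theorem tendsto_inv_pow_mul_comp_sq (n : ℕ) :
    Tendsto (fun x : ℝ => (x ^ n)⁻¹ * expNegInvGlue (x ^ 2)) (𝓝 0) (𝓝 0) := by
  have hglue : Tendsto (fun x : ℝ => ((x ^ 2)⁻¹) ^ n * expNegInvGlue (x ^ 2)) (𝓝 0) (𝓝 0) := by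
    have h := (tendsto_polynomial_inv_mul_zero (Polynomial.X ^ n)).comp
      ((continuous_pow 2).tendsto' (0 : ℝ) 0 (zero_pow two_ne_zero))
    simpa only [Function.comp_def, Polynomial.eval_pow, Polynomial.eval_X] using h
  have hpow : Tendsto (fun x : ℝ => x ^ n) (𝓝 0) (𝓝 (0 ^ n)) := (continuous_pow n).tendsto 0
  have h := hpow.mul hglue
  rw [mul_zero] at h
  refine h.congr fun x => ?_
  rcases eq_or_ne x 0 with rfl | hx
  · simp
  · rw [inv_pow, ← pow_mul, mul_comm 2 n, pow_mul, sq, mul_inv, mul_assoc,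
      mul_inv_cancel_left₀ (pow_ne_zero n hx)]

theorem tendsto_comp_mul_sq_div_pow (n : ℕ) (u : ℝ) :
    Tendsto (fun p : ℝ × ℝ => expNegInvGlue ((p.1 * p.2) ^ 2) / p.1 ^ n)
      ((𝓝[>] (0 : ℝ)) ×ˢ 𝓝 u) (𝓝 0) := by
  set M := |u| + 1 with hM_def
  have hM : 0 < M := by positivity
  have hpos : ∀ᶠ p : ℝ × ℝ in (𝓝[>] (0 : ℝ)) ×ˢ 𝓝 u, 0 < p.1 :=
    Eventually.prod_inl self_mem_nhdsWithin _
  have hnear : ∀ᶠ v in 𝓝 u, |v| ≤ M := (eventually_abs_sub_lt u one_pos).mono fun v hv => by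
    linarith [abs_sub_abs_le_abs_sub v u]
  replace hnear : ∀ᶠ p : ℝ × ℝ in (𝓝[>] (0 : ℝ)) ×ˢ 𝓝 u, |p.2| ≤ M := hnear.prod_inr _
  have hMt : Tendsto (fun p : ℝ × ℝ => M * p.1) ((𝓝[>] (0 : ℝ)) ×ˢ 𝓝 u) (𝓝 0) := by
    simpa using
      ((tendsto_fst (f := 𝓝[>] (0 : ℝ)) (g := 𝓝 u)).mono_right nhdsWithin_le_nhds).const_mul M
  -- for `|u'| ≤ M`, monotonicity of `g` bounds the quotient by `M ^ n * (M t)⁻ⁿ g ((M t)²)`,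
  -- which no longer depends on `u'`
  have hupper := ((tendsto_inv_pow_mul_comp_sq n).comp hMt).const_mul (M ^ n)
  rw [mul_zero] at hupper
  refine tendsto_of_tendsto_of_tendsto_of_le_of_le' tendsto_const_nhds hupper ?_ ?_
  · filter_upwards [hpos] with p ht
    exact div_nonneg (nonneg _) (by positivity)
  · filter_upwards [hpos, hnear] with p ht hu
    have hsq : (p.1 * p.2) ^ 2 ≤ (M * p.1) ^ 2 := by
      rw [sq_le_sq, abs_mul, abs_of_pos ht, abs_of_pos (mul_pos hM ht)]
      nlinarith
    have hscale : M ^ n * ((M * p.1) ^ n)⁻¹ = (p.1 ^ n)⁻¹ := by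
      rw [mul_pow]
      field_simp
    rw [Function.comp_apply, ← mul_assoc, hscale, div_eq_inv_mul]
    gcongr
    exact expNegInvGlue.monotone hsq

end expNegInvGlue

theorem fEx2_eq (x : ℝ) : fEx2 x = ((-expNegInvGlue (x ^ 2) : ℝ) : EReal) := by
  rcases eq_or_ne x 0 with rfl | hx
  · simp [fEx2]
  · simp [fEx2, hx, expNegInvGlue, div_eq_mul_inv]

theorem fEx2_lt_fEx2_zero {x : ℝ} (hx : x ≠ 0) : fEx2 x < fEx2 0 := by
  rw [fEx2_eq, fEx2_eq, EReal.coe_lt_coe_iff]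
  simpa using expNegInvGlue.pos_of_pos (sq_pos_of_ne_zero hx)

/-- all the lower Hadamard derivatives (of every order `n = k + 1`) of `fEx2`
at `0` with zero intermediate parameters vanish, yet `0` is not a local minimizer of
`fEx2`; indeed `fEx2 x < fEx2 0` for every `x ≠ 0`. -/
theorem stmt_6 :
    (∀ k : ℕ, ∀ u : ℝ, hadamardDeriv fEx2 0 k (fun _ => 0) u = 0) ∧
      ¬ IsLocalMin fEx2 0 ∧ ∀ x : ℝ, x ≠ 0 → fEx2 x < fEx2 0 := by
  have hf : fEx2 = fun x => ((-expNegInvGlue (x ^ 2) : ℝ) : EReal) := funext fEx2_eq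
  refine ⟨fun k u => ?_, not_isLocalMin_of_forall_lt fun x => fEx2_lt_fEx2_zero,
    fun x => fEx2_lt_fEx2_zero⟩
  rw [hf, hadamardDeriv_coe_zero_of_tendsto (c := 0), EReal.coe_zero]
  have h := (expNegInvGlue.tendsto_comp_mul_sq_div_pow (k + 1) u).const_mul
    (-((k + 1).factorial : ℝ))
  rw [mul_zero] at h
  refine h.congr fun p => ?_
  simp only [zero_add, smul_eq_mul, zero_pow two_ne_zero, expNegInvGlue.zero, neg_zero, sub_zero]
  ring
end

section
/- Every function f : E → ℝ ∪ {+∞} that is invex of order n (in terms of lower Hadamard derivatives) is also invex of order n+1. -/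
open Filter Topology

/-- A tuple of forms `(x₁*, …, x_k*)` is admissible at `xbar` if each `x_i*` belongs to the
lower Hadamard subdifferential of order `i` with parameters `(x₁*, …, x_(i-1)*)`. -/
def Admissible {E : Type*} [NormedAddCommGroup E] [InnerProductSpace ℝ E]
    (f : E → EReal) (xbar : E) {k : ℕ} (xs : FormTuple E k) : Prop :=
  ∀ i : Fin k, xs i ∈ hadamardSubdiff f xbar i.1 (xs.restrict i.1 (le_of_lt i.2))

/-- `xbar` is a stationary point of order `n`: there is an admissible tuple
`(x₁*, …, x_n*)` such that all the lower Hadamard derivatives of orders `1, …, n` with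
these parameters are nonnegative in every direction. -/
def IsStationaryOfOrder {E : Type*} [NormedAddCommGroup E] [InnerProductSpace ℝ E]
    (f : E → EReal) (n : ℕ) (xbar : E) : Prop :=
  f xbar ≠ ⊤ ∧ ∃ xs : FormTuple E n, Admissible f xbar xs ∧
    ∀ j : Fin n, ∀ u : E,
      0 ≤ hadamardDeriv f xbar j.1 (xs.restrict j.1 (le_of_lt j.2)) u

/-- `f` is invex of order `n` in terms of the lower Hadamard derivatives. -/
def IsInvexOfOrder {E : Type*} [NormedAddCommGroup E] [InnerProductSpace ℝ E]
    (f : E → EReal) (n : ℕ) : Prop :=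
  ∀ xbar : E, f xbar ≠ ⊤ → ∀ x : E,
    (∃ xs : FormTuple E (n - 1), Admissible f xbar xs) →
      ∃ η : Fin n → E, ∀ xs : FormTuple E (n - 1), Admissible f xbar xs →
        (∑ j : Fin n,
            hadamardDeriv f xbar j.1 (xs.restrict j.1 (Nat.le_pred_of_lt j.2)) (η j))
          ≤ f x - f xbar

theorem Admissible.restrict {E : Type*} [NormedAddCommGroup E] [InnerProductSpace ℝ E]
    {f : E → EReal} {xbar : E} {k : ℕ} {xs : FormTuple E k} (hxs : Admissible f xbar xs)
    (m : ℕ) (h : m ≤ k) : Admissible f xbar (xs.restrict m h) :=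
  fun i => hxs ⟨i.1, i.2.trans_le h⟩

/-- At `u' = 0` the quotient is `c * (f x - f x)` with `c > 0`, and `f x - f x ≤ 0` holds in
`EReal` without any finiteness assumption, since `⊤ - ⊤ = ⊥`. -/
theorem hadamardDeriv_zero_le {E : Type*} [NormedAddCommGroup E] [InnerProductSpace ℝ E]
    (f : E → EReal) (x : E) (k : ℕ) (xs : FormTuple E k) : hadamardDeriv f x k xs 0 ≤ 0 := by
  have h_freq : ∃ᶠ p : ℝ × E in 𝓝[>] (0 : ℝ) ×ˢ 𝓝 (0 : E), 0 < p.1 ∧ p.2 = 0 :=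
    have h_pos : ∀ᶠ t in 𝓝[>] (0 : ℝ), 0 < t := self_mem_nhdsWithin
    have h_pure : ∀ᶠ y in pure (0 : E), y = 0 := eventually_pure.mpr rfl
    (h_pos.prod_mk h_pure).frequently.filter_mono (prod_mono le_rfl (pure_le_nhds 0))
  refine liminf_le_of_frequently_le' (h_freq.mono fun p ⟨hp_pos, hp_zero⟩ => ?_)
  simp only [hp_zero, smul_zero, add_zero]
  have h_sum : (∑ i : Fin k, p.1 ^ (i.1 + 1) / (Nat.factorial (i.1 + 1)) *
      xs i (fun _ => (0 : E)) : ℝ) = 0 :=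
    Finset.sum_eq_zero fun i _ => by
      rw [show (fun _ => (0 : E)) = 0 from rfl, ContinuousMultilinearMap.map_zero, mul_zero]
  rw [h_sum, EReal.coe_zero, sub_zero, EReal.mul_nonpos_iff]
  exact .inl ⟨EReal.coe_nonneg.mpr (by positivity), EReal.sub_self_le_zero⟩

theorem stmt_12_general {E : Type*} [NormedAddCommGroup E] [InnerProductSpace ℝ E]
    (f : E → EReal) (n : ℕ)
    (hinvex : IsInvexOfOrder f n) : IsInvexOfOrder f (n + 1) := by
  intro xbar hxbar x ⟨xs₀, hxs₀⟩
  obtain ⟨η, hη⟩ := hinvex xbar hxbar x ⟨_, hxs₀.restrict (n - 1) (Nat.sub_le n 1)⟩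
  refine ⟨Fin.snoc η 0, fun xs hxs => ?_⟩
  simp only [Fin.sum_univ_castSucc, Fin.snoc_castSucc, Fin.snoc_last]
  calc _ ≤ (f x - f xbar) + 0 :=
        add_le_add (hη _ (hxs.restrict (n - 1) (Nat.sub_le n 1))) (hadamardDeriv_zero_le ..)
    _ = f x - f xbar := add_zero _

/-- every function invex of order `n` is invex of order `n + 1`. -/
theorem stmt_12 {E : Type*} [NormedAddCommGroup E] [InnerProductSpace ℝ E]
    [FiniteDimensional ℝ E] (f : E → EReal)
    (hbot : ∀ y, f y ≠ ⊥) (hproper : ∃ y, f y ≠ ⊤) (n : ℕ) (hn : 1 ≤ n)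
    (hinvex : IsInvexOfOrder f n) : IsInvexOfOrder f (n + 1) :=
  stmt_12_general f n hinvex
end

section
/- The function f : ℝ² → ℝ given by f(x₁,x₂) = −x₁² − x₂² is second-order invex in terms of lower Hadamard derivatives but not invex: its unique first-order stationary point (0,0) is not a global minimizer, while f has no second-order stationary points (since ∂₋¹f(0,0) = {0} and d₋²f((0,0); 0; u) = −2‖u‖² < 0 for u ≠ 0). -/
open Filter Topology

/-- The function `f (x₁, x₂) = -x₁² - x₂²` as an extended real valued function. -/
noncomputable def fEx13 : EuclideanSpace ℝ (Fin 2) → EReal := fun x =>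
  ((-(x 0) ^ 2 - (x 1) ^ 2 : ℝ) : EReal)

/-! For `f x = -‖x‖²` the difference quotients are polynomial in `t`, so every lower Hadamard
derivative is a plain limit: `d¹f(x; u) = -2⟪x, u⟫`. A first-order subgradient lies below this
linear form and hence equals it, and with that parameter `d²f(x; u) = -2‖u‖²` at every `x`.
So the only first-order stationary point is `0`, a global maximizer; no point is second-order
stationary; and `η = (0, x)` witnesses second-order invexity at every `x̄`. -/

open scoped RealInnerProductSpace

theorem liminf_nhdsGT_prod_eq_of_continuousAt {X : Type*} [TopologicalSpace X]
    {F : ℝ × X → EReal} {g : ℝ × X → ℝ} {u : X} (hg : ContinuousAt g (0, u))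
    (hFg : ∀ p : ℝ × X, 0 < p.1 → F p = g p) :
    Filter.liminf F ((𝓝[>] (0 : ℝ)) ×ˢ 𝓝 u) = g (0, u) := by
  have hpos : ∀ᶠ p in (𝓝[>] (0 : ℝ)) ×ˢ 𝓝 u, 0 < p.1 :=
    eventually_mem_nhdsWithin.prod_inl _
  have hle : (𝓝[>] (0 : ℝ)) ×ˢ 𝓝 u ≤ 𝓝 ((0 : ℝ), u) := by
    rw [nhds_prod_eq]
    exact Filter.prod_mono nhdsWithin_le_nhds le_rfl
  rw [Filter.liminf_congr (hpos.mono hFg)]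
  exact ((EReal.continuous_coe_iff.2 continuous_id).continuousAt.tendsto.comp
    (hg.tendsto.mono_left hle)).liminf_eq

theorem ContinuousMultilinearMap.apply_eq_diag {E F : Type*} [NormedAddCommGroup E]
    [NormedSpace ℝ E] [NormedAddCommGroup F] [NormedSpace ℝ F]
    (y : ContinuousMultilinearMap ℝ (fun _ : Fin 1 => E) F) (m : Fin 1 → E) :
    y m = y (fun _ => m 0) := by
  congr
  funext i
  rw [Subsingleton.elim i 0]

theorem ContinuousMultilinearMap.map_neg_diag {E F : Type*} [NormedAddCommGroup E]
    [NormedSpace ℝ E] [NormedAddCommGroup F] [NormedSpace ℝ F]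
    (y : ContinuousMultilinearMap ℝ (fun _ : Fin 1 => E) F) (v : E) :
    y (fun _ => -v) = -y (fun _ => v) := by
  simpa using y.map_smul_univ (fun _ => (-1 : ℝ)) (fun _ => v)

section NegNormSq

variable {E : Type*} [NormedAddCommGroup E]

noncomputable def negNormSq (x : E) : EReal := ((-‖x‖ ^ 2 : ℝ) : EReal)

theorem negNormSq_lt_negNormSq_zero {x : E} (hx : x ≠ 0) : negNormSq x < negNormSq (0 : E) := by
  rw [negNormSq, negNormSq, EReal.coe_lt_coe_iff, norm_zero]
  have := norm_pos_iff.2 hx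
  nlinarith

theorem neg_two_mul_norm_sq_lt_zero {u : E} (hu : u ≠ 0) :
    ((-2 * ‖u‖ ^ 2 : ℝ) : EReal) < 0 := by
  rw [← EReal.coe_zero, EReal.coe_lt_coe_iff]
  have := norm_pos_iff.2 hu
  nlinarith

variable [InnerProductSpace ℝ E]

theorem neg_norm_add_smul_sq (x v : E) (t : ℝ) :
    -‖x + t • v‖ ^ 2 = -‖x‖ ^ 2 - t * (2 * ⟪x, v⟫) - t ^ 2 * ‖v‖ ^ 2 := by
  rw [norm_add_sq_real, inner_smul_right, norm_smul, Real.norm_eq_abs, mul_pow, sq_abs]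
  ring

theorem hadamardDeriv_zero_negNormSq (x u : E) (xs : FormTuple E 0) :
    hadamardDeriv negNormSq x 0 xs u = ((-2 * ⟪x, u⟫ : ℝ) : EReal) := by
  refine (liminf_nhdsGT_prod_eq_of_continuousAt (u := u)
    (g := fun p : ℝ × E => -2 * ⟪x, p.2⟫ - p.1 * ‖p.2‖ ^ 2) (by fun_prop) ?_).trans
    (by simp)
  rintro ⟨t, v⟩ (ht : 0 < t)
  simp only [negNormSq, Finset.univ_eq_empty, Finset.sum_empty, neg_norm_add_smul_sq]
  rw [← EReal.coe_sub, ← EReal.coe_sub, ← EReal.coe_mul, EReal.coe_eq_coe_iff]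
  field_simp
  ring

theorem hadamardDeriv_one_negNormSq (x u : E) (xs : FormTuple E 1)
    (hxs : ∀ v, xs 0 (fun _ => v) = -2 * ⟪x, v⟫) :
    hadamardDeriv negNormSq x 1 xs u = ((-2 * ‖u‖ ^ 2 : ℝ) : EReal) := by
  refine liminf_nhdsGT_prod_eq_of_continuousAt (u := u)
    (g := fun p : ℝ × E => -2 * ‖p.2‖ ^ 2) (by fun_prop) ?_
  rintro ⟨t, v⟩ (ht : 0 < t)
  rw [negNormSq, negNormSq, Fin.sum_univ_one, hxs]
  simp only [Fin.val_zero, neg_norm_add_smul_sq, Nat.factorial]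
  rw [← EReal.coe_sub, ← EReal.coe_sub, ← EReal.coe_mul, EReal.coe_eq_coe_iff]
  field_simp
  ring

theorem mem_hadamardSubdiff_zero_negNormSq_iff (x : E) (xs : FormTuple E 0) (y : MForm E 1) :
    y ∈ hadamardSubdiff negNormSq x 0 xs ↔ ∀ v, y (fun _ => v) = -2 * ⟪x, v⟫ := by
  simp only [hadamardSubdiff, Set.mem_ofPred_eq, hadamardDeriv_zero_negNormSq,
    EReal.coe_le_coe_iff]
  refine ⟨fun h v => ?_, fun h v => (h v).le⟩
  have h_neg := h (-v)
  rw [y.map_neg_diag, inner_neg_right] at h_neg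
  linarith [h v]

theorem admissible_one_negNormSq_iff (x : E) (xs : FormTuple E 1) :
    Admissible negNormSq x xs ↔ ∀ v, xs 0 (fun _ => v) = -2 * ⟪x, v⟫ := by
  rw [Admissible, Fin.forall_fin_one]
  exact mem_hadamardSubdiff_zero_negNormSq_iff x _ _

theorem hadamardSubdiff_zero_negNormSq_zero (xs : FormTuple E 0) :
    hadamardSubdiff (negNormSq (E := E)) 0 0 xs = {0} := by
  ext y
  rw [mem_hadamardSubdiff_zero_negNormSq_iff, Set.mem_singleton_iff]
  simp only [inner_zero_left, mul_zero]
  refine ⟨fun h => ?_, fun h v => by simp [h]⟩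
  ext m
  rw [y.apply_eq_diag, h]
  rfl

theorem isStationaryOfOrder_one_negNormSq_iff (x : E) :
    IsStationaryOfOrder negNormSq 1 x ↔ x = 0 := by
  refine ⟨fun ⟨_, xs, _, hnonneg⟩ => ?_, ?_⟩
  · have h : 0 ≤ hadamardDeriv negNormSq x 0 _ x := hnonneg 0 x
    rw [hadamardDeriv_zero_negNormSq, real_inner_self_eq_norm_sq, ← EReal.coe_zero,
      EReal.coe_le_coe_iff] at h
    exact norm_eq_zero.1 (by nlinarith [norm_nonneg x])
  · rintro rfl
    refine ⟨EReal.coe_ne_top _, fun _ => 0, (admissible_one_negNormSq_iff 0 _).2 (by simp),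
      fun j u => ?_⟩
    obtain rfl := Fin.fin_one_eq_zero j
    exact le_of_le_of_eq (by simp) (hadamardDeriv_zero_negNormSq 0 u _).symm

theorem not_isStationaryOfOrder_two_negNormSq [Nontrivial E] (x : E) :
    ¬ IsStationaryOfOrder negNormSq 2 x := by
  rintro ⟨_, xs, hadm, hnonneg⟩
  obtain ⟨u, hu⟩ := exists_ne (0 : E)
  have hxs : ∀ v, xs 0 (fun _ => v) = -2 * ⟪x, v⟫ :=
    (mem_hadamardSubdiff_zero_negNormSq_iff x _ _).1 (hadm 0)
  have h := hnonneg 1 u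
  simp only [Fin.val_one] at h
  rw [hadamardDeriv_one_negNormSq x u _ hxs] at h
  exact (neg_two_mul_norm_sq_lt_zero hu).not_ge h

theorem isInvexOfOrder_two_negNormSq : IsInvexOfOrder (negNormSq (E := E)) 2 := by
  intro xbar _ x _
  -- `d¹f(x̄; 0) + d²f(x̄; x) = -2‖x‖² ≤ ‖x̄‖² - ‖x‖² = f x - f x̄`
  refine ⟨![0, x], fun xs hadm => ?_⟩
  have hxs := (admissible_one_negNormSq_iff xbar xs).1 hadm
  simp only [Fin.sum_univ_two, Fin.val_zero, Fin.val_one]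
  rw [hadamardDeriv_zero_negNormSq, hadamardDeriv_one_negNormSq xbar _ (xs.restrict 1 le_rfl) hxs]
  simp only [Matrix.cons_val_zero, Matrix.cons_val_one, inner_zero_right, negNormSq]
  rw [← EReal.coe_add, ← EReal.coe_sub, EReal.coe_le_coe_iff]
  nlinarith [sq_nonneg ‖x‖, sq_nonneg ‖xbar‖]

theorem not_isInvexOfOrder_one_negNormSq [Nontrivial E] :
    ¬ IsInvexOfOrder (negNormSq (E := E)) 1 := by
  intro h
  obtain ⟨x, hx⟩ := exists_ne (0 : E)
  obtain ⟨η, hη⟩ := h 0 (EReal.coe_ne_top _) x ⟨fun i => i.elim0, fun i => i.elim0⟩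
  have h := hη (fun i => i.elim0) (fun i => i.elim0)
  simp only [Fin.sum_univ_one, Fin.val_zero] at h
  rw [hadamardDeriv_zero_negNormSq, inner_zero_left, mul_zero, EReal.coe_zero, EReal.sub_nonneg
    (x := negNormSq x) (.inl (EReal.coe_ne_top _)) (.inl (EReal.coe_ne_bot _))] at h
  exact (negNormSq_lt_negNormSq_zero hx).not_ge h

end NegNormSq

theorem fEx13_eq_negNormSq : fEx13 = negNormSq := by
  funext x
  simp only [fEx13, negNormSq, EuclideanSpace.real_norm_sq_eq, Fin.sum_univ_two]
  ring_nf

/-- `fEx13` is second-order invex but not invex: its unique first-order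
stationary point `0` is not a global minimizer, it has no second-order stationary points,
`∂₋¹ fEx13 0 = {0}`, and `d₋² fEx13 (0; 0; u) = -2‖u‖² < 0` for `u ≠ 0`. -/
theorem stmt_13 :
    IsInvexOfOrder fEx13 2 ∧ ¬ IsInvexOfOrder fEx13 1 ∧
      (∀ xbar : EuclideanSpace ℝ (Fin 2), IsStationaryOfOrder fEx13 1 xbar ↔ xbar = 0) ∧
      ¬ (∀ x : EuclideanSpace ℝ (Fin 2), fEx13 0 ≤ fEx13 x) ∧
      ¬ (∃ xbar : EuclideanSpace ℝ (Fin 2), IsStationaryOfOrder fEx13 2 xbar) ∧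
      hadamardSubdiff fEx13 0 0 (fun _ => 0) = {0} ∧
      (∀ u : EuclideanSpace ℝ (Fin 2),
        hadamardDeriv fEx13 0 1 (fun _ => 0) u = ((-2 * ‖u‖ ^ 2 : ℝ) : EReal)) ∧
      ∀ u : EuclideanSpace ℝ (Fin 2), u ≠ 0 →
        hadamardDeriv fEx13 0 1 (fun _ => 0) u < 0 := by
  rw [fEx13_eq_negNormSq]
  have hderiv2 (u : EuclideanSpace ℝ (Fin 2)) :
      hadamardDeriv negNormSq 0 1 (fun _ => 0) u = ((-2 * ‖u‖ ^ 2 : ℝ) : EReal) :=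
    hadamardDeriv_one_negNormSq 0 u _ (by simp)
  obtain ⟨x, hx⟩ := exists_ne (0 : EuclideanSpace ℝ (Fin 2))
  exact ⟨isInvexOfOrder_two_negNormSq, not_isInvexOfOrder_one_negNormSq,
    isStationaryOfOrder_one_negNormSq_iff,
    fun h => (negNormSq_lt_negNormSq_zero hx).not_ge (h x),
    fun ⟨xbar, hxbar⟩ => not_isStationaryOfOrder_two_negNormSq xbar hxbar,
    hadamardSubdiff_zero_negNormSq_zero _, hderiv2,
    fun u hu => (hderiv2 u).trans_lt (neg_two_mul_norm_sq_lt_zero hu)⟩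
end

section
/- Let f : E → ℝ ∪ {+∞} be proper, continuous near x̄ ∈ dom f, and ℓ-stable at x̄, and suppose f satisfies the quadratic growth directional condition (ii) at x̄: whenever the lower Dini derivative D₋f(x̄;u) = 0 for a unit vector u, there exist δ > 0 and α > 0 with f(x̄ + tu) ≥ f(x̄) + αt² for all t ∈ [0,δ). Then x̄ is an isolated local minimizer of second order if and only if ∇f(x̄) = 0. -/
open Filter Topology

/-- The lower Dini directional derivative `D₋ f (x; u) = liminf_{t↓0} (f (x+tu) - f x)/t`. -/
noncomputable def diniLower {E : Type*} [NormedAddCommGroup E] [InnerProductSpace ℝ E]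
    (f : E → EReal) (x u : E) : EReal :=
  Filter.liminf (fun t : ℝ => ((t⁻¹ : ℝ) : EReal) * (f (x + t • u) - f x)) (𝓝[>] (0 : ℝ))

/-- `f` is `ℓ`-stable at `xbar`: on some neighborhood `U` of `xbar` the lower Dini
derivatives satisfy `|D₋f (y; u) - D₋f (xbar; u)| ≤ K ‖y - xbar‖ ‖u‖` for `y ∈ U ∩ dom f`. -/
def IsEllStable {E : Type*} [NormedAddCommGroup E] [InnerProductSpace ℝ E]
    (f : E → EReal) (xbar : E) : Prop :=
  ∃ U ∈ 𝓝 xbar, ∃ K > (0 : ℝ), ∀ y ∈ U, f y ≠ ⊤ → ∀ u : E,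
    diniLower f y u - diniLower f xbar u ≤ ((K * ‖y - xbar‖ * ‖u‖ : ℝ) : EReal) ∧
    diniLower f xbar u - diniLower f y u ≤ ((K * ‖y - xbar‖ * ‖u‖ : ℝ) : EReal)


/-!
Near `xbar`, `f` is a finite continuous real function `g`. Diewert's mean value inequality
turns `ℓ`-stability into a segment estimate: `g (y + w) - g y` differs from `D₋g(xbar; w)` by at
most `K · sup ‖z - xbar‖ · ‖w‖` over `z ∈ [y, y + w]`. Hence `D₋g(xbar; ·)` is finite, is the limit
of the one-sided difference quotients (so it is additive and positively homogeneous), and is the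
Fréchet derivative of `g` at `xbar`. When that derivative vanishes, the same estimate spreads the
quadratic growth (ii) along a unit direction `u`, with half the constant, to all directions near
`u`, and compactness of the unit sphere makes the growth uniform. The converse is Fermat's rule.
-/

open Set Metric

theorem sub_le_mul_of_liminf_slope_le {φ : ℝ → ℝ} {a b C : ℝ} (hab : a ≤ b)
    (hφ : ContinuousOn φ (Icc a b))
    (hD : ∀ s ∈ Ico a b, liminf (fun z => (slope φ s z : EReal)) (𝓝[>] s) ≤ C) :
    φ b - φ a ≤ C * (b - a) := by
  have key := image_le_of_liminf_slope_right_le_deriv_boundary hφ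
    (B := fun s => φ a + C * (s - a)) (B' := fun _ => C) (by simp) (by fun_prop)
    (fun s _ => (((hasDerivWithinAt_id s _).sub_const a).const_mul C).const_add (φ a)
      |>.congr_deriv (mul_one C))
    (fun s hs r hr => by
      simpa using frequently_lt_of_liminf_lt (b := (r : EReal)) (by isBoundedDefault)
        ((hD s hs).trans_lt (EReal.coe_lt_coe hr)))
    (right_mem_Icc.2 hab)
  linarith

theorem mul_le_sub_of_le_liminf_slope {φ : ℝ → ℝ} {a b C : ℝ} (hab : a ≤ b)
    (hφ : ContinuousOn φ (Icc a b))
    (hD : ∀ s ∈ Ico a b, (C : EReal) ≤ liminf (fun z => (slope φ s z : EReal)) (𝓝[>] s)) :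
    C * (b - a) ≤ φ b - φ a := by
  have key := image_le_of_liminf_slope_right_le_deriv_boundary hφ.neg
    (B := fun s => -φ a + -C * (s - a)) (B' := fun _ => -C) (by simp) (by fun_prop)
    (fun s _ => (((hasDerivWithinAt_id s _).sub_const a).const_mul (-C)).const_add (-φ a)
      |>.congr_deriv (mul_one (-C)))
    (fun s hs r hr => by
      have hlt : ((-r : ℝ) : EReal) < liminf (fun z => (slope φ s z : EReal)) (𝓝[>] s) :=
        (EReal.coe_lt_coe (by linarith)).trans_le (hD s hs)
      refine ((eventually_lt_of_lt_liminf hlt (by isBoundedDefault)).mono fun z hz => ?_).frequently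
      rw [EReal.coe_lt_coe_iff] at hz
      rw [slope_neg_fun, Pi.neg_apply, Pi.neg_apply]
      linarith)
    (right_mem_Icc.2 hab)
  rw [Pi.neg_apply] at key
  linarith

theorem tendsto_inv_mul_of_abs_sub_le {F : ℝ → ℝ} {c M : ℝ}
    (h : ∀ᶠ t in 𝓝[>] 0, |F t - t * c| ≤ M * t ^ 2) :
    Tendsto (fun t => t⁻¹ * F t) (𝓝[>] 0) (𝓝 c) := by
  have hM : Tendsto (fun t : ℝ => M * t) (𝓝[>] 0) (𝓝 0) :=
    ((continuous_const_mul M).tendsto' 0 0 (mul_zero M)).mono_left nhdsWithin_le_nhds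
  refine tendsto_iff_norm_sub_tendsto_zero.2
    (squeeze_zero' (Eventually.of_forall fun _ => norm_nonneg _) ?_ hM)
  filter_upwards [h, self_mem_nhdsWithin] with t ht (htpos : 0 < t)
  calc ‖t⁻¹ * F t - c‖ = t⁻¹ * |F t - t * c| := by
        rw [Real.norm_eq_abs, show t⁻¹ * F t - c = t⁻¹ * (F t - t * c) by field_simp,
          abs_mul, abs_of_pos (inv_pos.2 htpos)]
    _ ≤ t⁻¹ * (M * t ^ 2) := by gcongr
    _ = M * t := by field_simp

theorem eventually_mul_lt_nhdsGT (a : ℝ) {r : ℝ} (hr : 0 < r) :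
    ∀ᶠ t in 𝓝[>] (0 : ℝ), t * a < r :=
  nhdsWithin_le_nhds (((continuous_mul_const a).tendsto' 0 0 (zero_mul a)).eventually
    (gt_mem_nhds hr))

section Segment

variable {E : Type*} [NormedAddCommGroup E] [NormedSpace ℝ E]

theorem norm_add_smul_sub_le {x y w : E} {ε s : ℝ} (hs : s ∈ Icc 0 ε) :
    ‖y + s • w - x‖ ≤ ‖y - x‖ + ε * ‖w‖ := by
  calc ‖y + s • w - x‖ = ‖(y - x) + s • w‖ := by rw [add_sub_right_comm]
    _ ≤ ‖y - x‖ + s * ‖w‖ := by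
      grw [norm_add_le, norm_smul, Real.norm_of_nonneg hs.1]
    _ ≤ ‖y - x‖ + ε * ‖w‖ := by gcongr; exact hs.2

theorem continuousOn_comp_add_smul {g : E → ℝ} {y w : E} {ε : ℝ}
    (hg : ∀ s ∈ Icc 0 ε, ContinuousAt g (y + s • w)) :
    ContinuousOn (fun s : ℝ => g (y + s • w)) (Icc 0 ε) := fun s hs =>
  ((hg s hs).comp (f := fun s : ℝ => y + s • w) (by fun_prop)).continuousWithinAt

theorem add_smul_mem_ball {x y w : E} {r ε s : ℝ} (hs : s ∈ Icc 0 ε)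
    (h : ‖y - x‖ + ε * ‖w‖ < r) : y + s • w ∈ ball x r := by
  rw [mem_ball, dist_eq_norm]
  exact (norm_add_smul_sub_le hs).trans_lt h

end Segment

section DiniMeanValue

variable {E : Type*} [NormedAddCommGroup E] [InnerProductSpace ℝ E]

theorem diniLower_congr {f f' : E → EReal} {y : E} (h : f =ᶠ[𝓝 y] f') (u : E) :
    diniLower f y u = diniLower f' y u := by
  have hline : Tendsto (fun t : ℝ => y + t • u) (𝓝[>] 0) (𝓝 y) :=
    ((continuous_const.add (continuous_id.smul continuous_const)).tendsto' 0 y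
      (by simp)).mono_left nhdsWithin_le_nhds
  refine liminf_congr ?_
  filter_upwards [hline.eventually h] with t ht
  rw [ht, h.self_of_nhds]

theorem diniLower_add_smul_eq_liminf_slope (g : E → ℝ) (y w : E) (s : ℝ) :
    diniLower (Real.toEReal ∘ g) (y + s • w) w =
      liminf (fun z => (slope (fun r => g (y + r • w)) s z : EReal)) (𝓝[>] s) := by
  rw [← add_zero s, ← map_add_left_nhdsGT, add_zero, diniLower, ← liminf_comp]
  congr 1
  funext t
  simp [slope_def_field, div_eq_inv_mul, add_smul, add_assoc]

theorem sub_le_mul_of_diniLower_le {g : E → ℝ} {y w : E} {ε C : ℝ} (hε : 0 ≤ ε)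
    (hg : ∀ s ∈ Icc 0 ε, ContinuousAt g (y + s • w))
    (hD : ∀ s ∈ Ico 0 ε, diniLower (Real.toEReal ∘ g) (y + s • w) w ≤ C) :
    g (y + ε • w) - g y ≤ C * ε := by
  simpa using sub_le_mul_of_liminf_slope_le hε (continuousOn_comp_add_smul hg)
    fun s hs => diniLower_add_smul_eq_liminf_slope g y w s ▸ hD s hs

theorem mul_le_sub_of_le_diniLower {g : E → ℝ} {y w : E} {ε C : ℝ} (hε : 0 ≤ ε)
    (hg : ∀ s ∈ Icc 0 ε, ContinuousAt g (y + s • w))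
    (hD : ∀ s ∈ Ico 0 ε, (C : EReal) ≤ diniLower (Real.toEReal ∘ g) (y + s • w) w) :
    C * ε ≤ g (y + ε • w) - g y := by
  simpa using mul_le_sub_of_le_liminf_slope hε (continuousOn_comp_add_smul hg)
    fun s hs => diniLower_add_smul_eq_liminf_slope g y w s ▸ hD s hs

end DiniMeanValue

section Stability

variable {E : Type*} [NormedAddCommGroup E] [InnerProductSpace ℝ E]

structure IsEllStableOnBall (g : E → ℝ) (x : E) (r K : ℝ) : Prop where
  radius_pos : 0 < r
  const_nonneg : 0 ≤ K
  continuousAt : ∀ y ∈ ball x r, ContinuousAt g y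
  diniLower_le : ∀ y ∈ ball x r, ∀ u, diniLower (Real.toEReal ∘ g) y u ≤
    diniLower (Real.toEReal ∘ g) x u + (K * ‖y - x‖ * ‖u‖ : ℝ)
  diniLower_center_le : ∀ y ∈ ball x r, ∀ u, diniLower (Real.toEReal ∘ g) x u ≤
    diniLower (Real.toEReal ∘ g) y u + (K * ‖y - x‖ * ‖u‖ : ℝ)

theorem IsEllStable.exists_isEllStableOnBall {f : E → EReal} {xbar : E}
    (hstab : IsEllStable f xbar) (hbot : f xbar ≠ ⊥) (hdom : f xbar ≠ ⊤)
    (hcont : ∀ᶠ y in 𝓝 xbar, ContinuousAt f y) :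
    ∃ r K, (∀ y ∈ ball xbar r, f y = ((f y).toReal : EReal)) ∧
      IsEllStableOnBall (fun y => (f y).toReal) xbar r K := by
  obtain ⟨U, hU, K, hK, hUK⟩ := hstab
  have hfin : ∀ᶠ y in 𝓝 xbar, f y ∈ Ioo ⊥ ⊤ :=
    hcont.self_of_nhds (Ioo_mem_nhds (bot_lt_iff_ne_bot.2 hbot) (lt_top_iff_ne_top.2 hdom))
  obtain ⟨r, hr, hball⟩ :=
    eventually_nhds_iff_ball.1 ((eventually_mem_set.2 hU).and (hfin.and hcont))
  have hfg : ∀ y ∈ ball xbar r, f y = ((f y).toReal : EReal) := fun y hy =>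
    (EReal.coe_toReal (hball y hy).2.1.2.ne (hball y hy).2.1.1.ne').symm
  have hD : ∀ y ∈ ball xbar r, ∀ u,
      diniLower f y u = diniLower (Real.toEReal ∘ fun y => (f y).toReal) y u := fun y hy =>
    diniLower_congr (eventually_of_mem (isOpen_ball.mem_nhds hy) hfg)
  have hsub : ∀ (a b : EReal) (m : ℝ), a - b ≤ m → a ≤ b + m := fun a b m h => by
    rw [add_comm]
    exact (EReal.sub_le_iff_le_add (.inr (EReal.coe_ne_top m)) (.inr (EReal.coe_ne_bot m))).1 h
  refine ⟨r, K, hfg, hr, hK.le, fun y hy => ?_, fun y hy u => ?_, fun y hy u => ?_⟩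
  · exact (EReal.tendsto_toReal (hball y hy).2.1.2.ne (hball y hy).2.1.1.ne').comp
      (hball y hy).2.2
  all_goals
    have h := hUK y (hball y hy).1 (hball y hy).2.1.2.ne u
    rw [hD y hy, hD xbar (mem_ball_self hr)] at h
  · exact hsub _ _ _ h.1
  · exact hsub _ _ _ h.2

end Stability

namespace IsEllStableOnBall

variable {E : Type*} [NormedAddCommGroup E] [InnerProductSpace ℝ E]
  {g : E → ℝ} {x : E} {r K : ℝ}

theorem coe_toReal_diniLower (hs : IsEllStableOnBall g x r K) (u : E) :
    ((diniLower (Real.toEReal ∘ g) x u).toReal : EReal) = diniLower (Real.toEReal ∘ g) x u := by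
  set ε := r / (‖u‖ + 1)
  have hε : 0 < ε := div_pos hs.radius_pos (by positivity)
  have hseg : ‖x - x‖ + ε * ‖u‖ < r := by
    rw [sub_self, norm_zero, zero_add]
    calc ε * ‖u‖ < ε * (‖u‖ + 1) := by gcongr; linarith
      _ = r := div_mul_cancel₀ _ (by positivity)
  have hg : ∀ s ∈ Icc 0 ε, ContinuousAt g (x + s • u) := fun s hs' =>
    hs.continuousAt _ (add_smul_mem_ball hs' hseg)
  have hmem : ∀ s ∈ Ico 0 ε, x + s • u ∈ ball x r := fun s hs' =>
    add_smul_mem_ball (Ico_subset_Icc_self hs') hseg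
  set Δ := g (x + ε • u) - g x
  refine EReal.coe_toReal (fun htop => ?_) (fun hbot => ?_)
  · -- by stability `D₋g = ⊤` along the whole segment, so `g` would outgrow every line
    have := mul_le_sub_of_le_diniLower (C := (Δ + 1) / ε) hε.le hg fun s hs' => by
      have h := hs.diniLower_center_le _ (hmem s hs') u
      rw [htop] at h
      by_contra hlt
      exact (EReal.add_lt_top (ne_top_of_lt (not_le.1 hlt)) (EReal.coe_ne_top _)).not_ge h
    rw [div_mul_cancel₀ _ hε.ne'] at this
    linarith
  · have := sub_le_mul_of_diniLower_le (C := (Δ - 1) / ε) hε.le hg fun s hs' => by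
      have h := hs.diniLower_le _ (hmem s hs') u
      rw [hbot, EReal.bot_add] at h
      exact h.trans bot_le
    rw [div_mul_cancel₀ _ hε.ne'] at this
    linarith

theorem abs_sub_sub_mul_diniLower_le (hs : IsEllStableOnBall g x r K) {y w : E} {ε : ℝ}
    (hε : 0 ≤ ε) (hy : ‖y - x‖ + ε * ‖w‖ < r) :
    |g (y + ε • w) - g y - ε * (diniLower (Real.toEReal ∘ g) x w).toReal| ≤
      K * (‖y - x‖ + ε * ‖w‖) * ‖w‖ * ε := by
  set c := (diniLower (Real.toEReal ∘ g) x w).toReal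
  set M := K * (‖y - x‖ + ε * ‖w‖) * ‖w‖
  have hc : diniLower (Real.toEReal ∘ g) x w = c := (hs.coe_toReal_diniLower w).symm
  have hg : ∀ s ∈ Icc 0 ε, ContinuousAt g (y + s • w) := fun s hs' =>
    hs.continuousAt _ (add_smul_mem_ball hs' hy)
  have hmem : ∀ s ∈ Ico 0 ε, y + s • w ∈ ball x r := fun s hs' =>
    add_smul_mem_ball (Ico_subset_Icc_self hs') hy
  have hdist : ∀ s ∈ Ico 0 ε, K * ‖y + s • w - x‖ * ‖w‖ ≤ M := fun s hs' =>
    mul_le_mul_of_nonneg_right (mul_le_mul_of_nonneg_left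
      (norm_add_smul_sub_le (Ico_subset_Icc_self hs')) hs.const_nonneg) (norm_nonneg w)
  have hup := sub_le_mul_of_diniLower_le (C := c + M) hε hg fun s hs' => by
    have h := hs.diniLower_le _ (hmem s hs') w
    rw [hc, ← EReal.coe_add] at h
    exact h.trans (EReal.coe_le_coe_iff.2 (by linarith [hdist s hs']))
  have hlow := mul_le_sub_of_le_diniLower (C := c - M) hε hg fun s hs' => by
    have h := hs.diniLower_center_le _ (hmem s hs') w
    rw [hc] at h
    calc ((c - M : ℝ) : EReal) ≤ ((c - K * ‖y + s • w - x‖ * ‖w‖ : ℝ) : EReal) :=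
          EReal.coe_le_coe_iff.2 (by linarith [hdist s hs'])
      _ ≤ _ := by
        rw [EReal.coe_sub]
        exact (EReal.sub_le_iff_le_add (.inl (EReal.coe_ne_bot _))
          (.inl (EReal.coe_ne_top _))).2 h
  rw [abs_le]
  constructor <;> linarith

theorem tendsto_slope (hs : IsEllStableOnBall g x r K) (u : E) :
    Tendsto (fun t => t⁻¹ * (g (x + t • u) - g x)) (𝓝[>] 0)
      (𝓝 (diniLower (Real.toEReal ∘ g) x u).toReal) := by
  refine tendsto_inv_mul_of_abs_sub_le (M := K * ‖u‖ ^ 2) ?_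
  filter_upwards [eventually_mul_lt_nhdsGT ‖u‖ hs.radius_pos, self_mem_nhdsWithin]
    with t ht (htpos : 0 < t)
  have := hs.abs_sub_sub_mul_diniLower_le htpos.le (y := x) (w := u)
    (by rwa [sub_self, norm_zero, zero_add])
  rw [sub_self, norm_zero, zero_add] at this
  exact this.trans_eq (by ring)

theorem toReal_diniLower_smul (hs : IsEllStableOnBall g x r K) {c : ℝ} (hc : 0 < c) (u : E) :
    (diniLower (Real.toEReal ∘ g) x (c • u)).toReal =
      c * (diniLower (Real.toEReal ∘ g) x u).toReal := by
  have hmul : Tendsto (c * ·) (𝓝[>] (0 : ℝ)) (𝓝[>] 0) :=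
    tendsto_iff_comap.2 (comap_mulLeft_nhdsGT_zero hc).ge
  refine tendsto_nhds_unique (hs.tendsto_slope (c • u))
    ((((hs.tendsto_slope u).comp hmul).const_mul c).congr fun t => ?_)
  simp only [Function.comp_apply, smul_smul, mul_comm t c]
  rw [mul_inv, ← mul_assoc, ← mul_assoc, mul_inv_cancel₀ hc.ne', one_mul]

theorem toReal_diniLower_add (hs : IsEllStableOnBall g x r K) (u v : E) :
    (diniLower (Real.toEReal ∘ g) x (u + v)).toReal =
      (diniLower (Real.toEReal ∘ g) x u).toReal +
        (diniLower (Real.toEReal ∘ g) x v).toReal := by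
  have hsub := (hs.tendsto_slope (u + v)).sub (hs.tendsto_slope v)
  have hu : Tendsto (fun t => t⁻¹ * (g (x + t • v + t • u) - g (x + t • v))) (𝓝[>] 0)
      (𝓝 (diniLower (Real.toEReal ∘ g) x u).toReal) := by
    refine tendsto_inv_mul_of_abs_sub_le (M := K * (‖v‖ + ‖u‖) * ‖u‖) ?_
    filter_upwards [eventually_mul_lt_nhdsGT (‖v‖ + ‖u‖) hs.radius_pos, self_mem_nhdsWithin]
      with t ht (htpos : 0 < t)
    have hv : ‖x + t • v - x‖ = t * ‖v‖ := by
      rw [add_sub_cancel_left, norm_smul, Real.norm_of_nonneg htpos.le]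
    have := hs.abs_sub_sub_mul_diniLower_le htpos.le (y := x + t • v) (w := u)
      (by rw [hv]; linarith)
    rw [hv] at this
    exact this.trans_eq (by ring)
  have := tendsto_nhds_unique hsub (hu.congr fun t => by
    rw [smul_add, add_comm (t • u), ← add_assoc]
    ring)
  linarith

theorem exists_hasFDerivAt [FiniteDimensional ℝ E] (hs : IsEllStableOnBall g x r K) :
    ∃ L : E →L[ℝ] ℝ, HasFDerivAt g L x ∧
      ∀ w, (L w : EReal) = diniLower (Real.toEReal ∘ g) x w := by
  set h := fun w => (diniLower (Real.toEReal ∘ g) x w).toReal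
  have hzero : h 0 = 0 := by
    have := hs.toReal_diniLower_smul two_pos 0
    rw [smul_zero] at this
    linarith
  have hneg : ∀ w, h (-w) = -h w := fun w => by
    have := hs.toReal_diniLower_add w (-w)
    rw [add_neg_cancel] at this
    linarith
  have hsmul : ∀ (c : ℝ) w, h (c • w) = c * h w := fun c w => by
    rcases lt_trichotomy c 0 with hc | rfl | hc
    · calc h (c • w) = -h ((-c) • w) := by rw [← hneg, neg_smul, neg_neg]
        _ = c * h w := by
          simp only [h]
          rw [hs.toReal_diniLower_smul (neg_pos.2 hc)]
          ring
    · rw [zero_smul, zero_mul, hzero]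
    · exact hs.toReal_diniLower_smul hc w
  let L : E →ₗ[ℝ] ℝ :=
    { toFun := h, map_add' := hs.toReal_diniLower_add, map_smul' := hsmul }
  refine ⟨L.toContinuousLinearMap, ?_, hs.coe_toReal_diniLower⟩
  rw [hasFDerivAt_iff_isLittleO_nhds_zero]
  refine Asymptotics.IsBigO.trans_isLittleO ?_ (Asymptotics.isLittleO_norm_pow_id one_lt_two)
  refine Asymptotics.IsBigO.of_bound K ?_
  filter_upwards [ball_mem_nhds 0 hs.radius_pos] with w hw
  rw [mem_ball_zero_iff] at hw
  have := hs.abs_sub_sub_mul_diniLower_le zero_le_one (y := x) (w := w) (by simpa using hw)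
  simp only [sub_self, norm_zero, zero_add, one_smul, one_mul, mul_one] at this
  rw [Real.norm_eq_abs, Real.norm_of_nonneg (by positivity), sq, ← mul_assoc]
  exact this

end IsEllStableOnBall

section QuadraticGrowth

variable {E : Type*} [NormedAddCommGroup E] [NormedSpace ℝ E] {g : E → ℝ} {x : E}

def UniformQuadraticGrowthOn (g : E → ℝ) (x : E) (S : Set E) : Prop :=
  ∃ C > 0, ∃ δ > 0, ∀ v ∈ S, ∀ t, 0 ≤ t → t < δ →
    g x + C * t ^ 2 ≤ g (x + t • v)

theorem IsCompact.uniformQuadraticGrowthOn {S : Set E} (hS : IsCompact S)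
    (h : ∀ u ∈ S, ∃ T ∈ 𝓝[S] u, UniformQuadraticGrowthOn g x T) :
    UniformQuadraticGrowthOn g x S := by
  refine hS.induction_on ⟨1, one_pos, 1, one_pos, by simp⟩ ?_ ?_ h
  · rintro s t hst ⟨C, hC, δ, hδ, hgrow⟩
    exact ⟨C, hC, δ, hδ, fun v hv => hgrow v (hst hv)⟩
  · rintro s t ⟨C₁, hC₁, δ₁, hδ₁, h₁⟩ ⟨C₂, hC₂, δ₂, hδ₂, h₂⟩
    refine ⟨min C₁ C₂, lt_min hC₁ hC₂, min δ₁ δ₂, lt_min hδ₁ hδ₂,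
      fun v hv t ht htδ => ?_⟩
    rcases hv with hv | hv
    · refine le_trans ?_ (h₁ v hv t ht (htδ.trans_le (min_le_left _ _)))
      gcongr
      exact min_le_left _ _
    · refine le_trans ?_ (h₂ v hv t ht (htδ.trans_le (min_le_right _ _)))
      gcongr
      exact min_le_right _ _

theorem UniformQuadraticGrowthOn.eventually_le (h : UniformQuadraticGrowthOn g x (sphere 0 1)) :
    ∃ C > 0, ∀ᶠ y in 𝓝 x, g x + C * ‖y - x‖ ^ 2 ≤ g y := by
  obtain ⟨C, hC, δ, hδ, hgrow⟩ := h
  refine ⟨C, hC, ?_⟩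
  filter_upwards [ball_mem_nhds x hδ] with y hy
  rcases eq_or_ne y x with rfl | hyx
  · simp
  have ht : 0 < ‖y - x‖ := norm_pos_iff.2 (sub_ne_zero.2 hyx)
  have := hgrow (‖y - x‖⁻¹ • (y - x)) (by simp [norm_smul, ht.ne']) ‖y - x‖ ht.le
    (by rwa [mem_ball, dist_eq_norm] at hy)
  rwa [smul_smul, mul_inv_cancel₀ ht.ne', one_smul, add_sub_cancel] at this

end QuadraticGrowth

theorem exists_quadraticGrowth_iff_of_eventuallyEq {E : Type*} [NormedAddCommGroup E]
    {f : E → EReal} {g : E → ℝ} {x : E} (hfg : f =ᶠ[𝓝 x] Real.toEReal ∘ g) :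
    (∃ C > (0 : ℝ), ∀ᶠ y in 𝓝 x, f x + ((C * ‖y - x‖ ^ 2 : ℝ) : EReal) ≤ f y) ↔
      ∃ C > (0 : ℝ), ∀ᶠ y in 𝓝 x, g x + C * ‖y - x‖ ^ 2 ≤ g y := by
  refine exists_congr fun C => and_congr_right fun _ => eventually_congr ?_
  filter_upwards [hfg] with y hy
  rw [hfg.self_of_nhds, hy, Function.comp_apply, Function.comp_apply, ← EReal.coe_add,
    EReal.coe_le_coe_iff]

section QuadraticGrowthOfStability

variable {E : Type*} [NormedAddCommGroup E] [InnerProductSpace ℝ E] {g : E → ℝ} {x : E}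

theorem IsEllStableOnBall.uniformQuadraticGrowthOn_nhds {r K : ℝ}
    (hs : IsEllStableOnBall g x r K) (hD : ∀ w, diniLower (Real.toEReal ∘ g) x w = 0) {u : E}
    (hu : ‖u‖ = 1) (hgrow : UniformQuadraticGrowthOn g x {u}) :
    ∃ T ∈ 𝓝 u, UniformQuadraticGrowthOn g x T := by
  obtain ⟨α, hα, δ, hδ, hgrow⟩ := hgrow
  have hK := hs.const_nonneg
  set η := min 1 (α / (4 * K + 1))
  have hη : 0 < η := lt_min one_pos (by positivity)
  have hKη : 4 * K * η ≤ α := calc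
    4 * K * η ≤ (4 * K + 1) * (α / (4 * K + 1)) := by
      gcongr
      · linarith
      · exact min_le_right _ _
    _ = α := mul_div_cancel₀ _ (by positivity)
  refine ⟨ball u η, ball_mem_nhds u hη, α / 2, by positivity, min δ (r / 2),
    lt_min hδ (half_pos hs.radius_pos), fun v hv t ht htδ => ?_⟩
  rw [mem_ball, dist_eq_norm] at hv
  set a := ‖v - u‖
  have ha : a ≤ 1 := hv.le.trans (min_le_left _ _)
  have htu : ‖x + t • u - x‖ = t := by
    rw [add_sub_cancel_left, norm_smul, hu, mul_one, Real.norm_of_nonneg ht]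
  have htw : ‖t • (v - u)‖ = t * a := by rw [norm_smul, Real.norm_of_nonneg ht]
  have hest := hs.abs_sub_sub_mul_diniLower_le zero_le_one (y := x + t • u) (w := t • (v - u))
    (by rw [htu, htw]; nlinarith [htδ.trans_le (min_le_right _ _)])
  rw [hD, EReal.toReal_zero, mul_zero, sub_zero, one_smul, htu, htw, one_mul,
    show x + t • u + t • (v - u) = x + t • v by rw [smul_sub]; abel] at hest
  have herr : K * (t + t * a) * (t * a) ≤ α / 2 * t ^ 2 := calc
    K * (t + t * a) * (t * a) = K * ((1 + a) * a) * t ^ 2 := by ring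
    _ ≤ K * (2 * η) * t ^ 2 := by gcongr; nlinarith [norm_nonneg (v - u)]
    _ ≤ α / 2 * t ^ 2 := by gcongr; linarith
  linarith [(abs_le.1 hest).1, hgrow u rfl t ht (htδ.trans_le (min_le_left _ _))]

theorem uniformQuadraticGrowthOn_singleton_of_eqOn_ball {f : E → EReal} {u : E} {r : ℝ}
    (hr : 0 < r) (hfg : ∀ y ∈ ball x r, f y = g y) (hu : ‖u‖ = 1)
    (h : ∃ δ > (0 : ℝ), ∃ α > (0 : ℝ), ∀ t : ℝ, 0 ≤ t → t < δ →
      f x + ((α * t ^ 2 : ℝ) : EReal) ≤ f (x + t • u)) :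
    UniformQuadraticGrowthOn g x {u} := by
  obtain ⟨δ, hδ, α, hα, hgrow⟩ := h
  refine ⟨α, hα, min δ r, lt_min hδ hr, fun v hv t ht htδ => ?_⟩
  have hmem : x + t • u ∈ ball x r := by
    rw [mem_ball, dist_eq_norm, add_sub_cancel_left, norm_smul, hu, mul_one,
      Real.norm_of_nonneg ht]
    exact htδ.trans_le (min_le_right _ _)
  have := hgrow t ht (htδ.trans_le (min_le_left _ _))
  rwa [hfg x (mem_ball_self hr), hfg _ hmem, ← EReal.coe_add, EReal.coe_le_coe_iff,
    ← mem_singleton_iff.1 hv] at this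

end QuadraticGrowthOfStability

/-- if the proper function `f` is continuous near `xbar ∈ dom f`,
`ℓ`-stable at `xbar`, and satisfies the quadratic growth directional condition (ii) at
`xbar`, then `xbar` is an isolated local minimizer of second order iff `∇f xbar = 0`. -/
theorem stmt_15 {E : Type*} [NormedAddCommGroup E] [InnerProductSpace ℝ E]
    [FiniteDimensional ℝ E] (f : E → EReal)
    (hbot : ∀ y, f y ≠ ⊥) (xbar : E) (hdom : f xbar ≠ ⊤)
    (hcont : ∀ᶠ y in 𝓝 xbar, ContinuousAt f y)
    (hstab : IsEllStable f xbar)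
    (hii : ∀ u : E, ‖u‖ = 1 → diniLower f xbar u = 0 →
      ∃ δ > (0 : ℝ), ∃ α > (0 : ℝ), ∀ t : ℝ, 0 ≤ t → t < δ →
        f xbar + ((α * t ^ 2 : ℝ) : EReal) ≤ f (xbar + t • u)) :
    (∃ C > (0 : ℝ), ∀ᶠ y in 𝓝 xbar,
        f xbar + ((C * ‖y - xbar‖ ^ 2 : ℝ) : EReal) ≤ f y) ↔
      fderiv ℝ (fun y => (f y).toReal) xbar = 0 := by
  obtain ⟨r, K, hfg, hs⟩ := hstab.exists_isEllStableOnBall (hbot xbar) hdom hcont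
  set g := fun y => (f y).toReal
  have hfg_near : f =ᶠ[𝓝 xbar] Real.toEReal ∘ g :=
    eventually_of_mem (ball_mem_nhds xbar hs.radius_pos) hfg
  rw [exists_quadraticGrowth_iff_of_eventuallyEq hfg_near]
  constructor
  · rintro ⟨C, hC, hgrowth⟩
    refine IsLocalMin.fderiv_eq_zero (hgrowth.mono fun y hy => ?_)
    linarith [mul_nonneg hC.le (sq_nonneg ‖y - xbar‖)]
  · intro h0
    obtain ⟨L, hL, hLD⟩ := hs.exists_hasFDerivAt
    have hD0 : ∀ w, diniLower (Real.toEReal ∘ g) xbar w = 0 := fun w => by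
      rw [← hLD, hL.fderiv.symm.trans h0]
      rfl
    refine UniformQuadraticGrowthOn.eventually_le <|
      (isCompact_sphere 0 1).uniformQuadraticGrowthOn fun u hu => ?_
    rw [mem_sphere_zero_iff_norm] at hu
    obtain ⟨T, hT, hgT⟩ := hs.uniformQuadraticGrowthOn_nhds hD0 hu <|
      uniformQuadraticGrowthOn_singleton_of_eqOn_ball hs.radius_pos hfg hu <|
        hii u hu (by rw [diniLower_congr hfg_near, hD0])
    exact ⟨T, mem_nhdsWithin_of_mem_nhds hT, hgT⟩
end

section
/- Let n ≥ 2, x̄ ∈ E, and let f : E → ℝ ∪ {+∞} be proper with f ∈ 𝓕_n(x̄). Then x̄ is an isolated local minimizer of order n if and only if 0 ∈ ∂₋¹f(x̄) and 0 ∈ ∂₋ⁱf(x̄; 0,…,0) for i = 2,…,n−1. -/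
open Filter Topology

/-- `f` belongs to the class `𝓕_n (xbar)`: `xbar ∈ dom f` and for every unit vector `u`
such that `0 ∈ ∂₋ⁱ f (xbar; 0, …, 0)` for `i = 1, …, n - 2` and
`d₋ⁱ f (xbar; 0, …, 0; u) = 0` for `i = 1, …, n - 1`, there are `ε, δ, α > 0` with
`f (xbar + t u') ≥ f xbar + α tⁿ` whenever `0 ≤ t < δ` and `‖u' - u‖ < ε`. -/
def MemClassF {E : Type*} [NormedAddCommGroup E] [InnerProductSpace ℝ E]
    (f : E → EReal) (n : ℕ) (xbar : E) : Prop :=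
  f xbar ≠ ⊤ ∧ ∀ u : E, ‖u‖ = 1 →
    (∀ j : ℕ, j + 3 ≤ n → (0 : MForm E (j + 1)) ∈ hadamardSubdiff f xbar j (fun _ => 0)) →
    (∀ j : ℕ, j + 2 ≤ n → hadamardDeriv f xbar j (fun _ => 0) u = 0) →
    ∃ ε > (0 : ℝ), ∃ δ > (0 : ℝ), ∃ α > (0 : ℝ), ∀ t : ℝ, ∀ u' : E,
      0 ≤ t → t < δ → ‖u' - u‖ < ε →
      f xbar + ((α * t ^ n : ℝ) : EReal) ≤ f (xbar + t • u')

/-!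
A local minimizer has nonnegative difference quotients, hence nonnegative lower derivatives of
every order. Conversely, fix a unit direction `u`. If all lower derivatives of order `< n` vanish
at `u`, membership in `𝓕_n` gives growth of order `n` on a cone around `u`; otherwise one of them
is nonzero, hence positive, and gives growth of lower order on such a cone, which is even better
for small `t`. Compactness of the unit sphere makes the constants of finitely many cones uniform.
-/

lemma EReal.coe_add_div_le_of_lt_mul_sub {a c r : ℝ} {z : EReal} (ha : 0 < a)
    (h : (c : EReal) < a * (z - r)) : ((r + c / a : ℝ) : EReal) ≤ z := by
  induction z using EReal.rec with
  | bot => simp [EReal.coe_mul_bot_of_pos ha] at h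
  | top => exact le_top
  | coe z =>
    rw [← EReal.coe_sub, ← EReal.coe_mul, EReal.coe_lt_coe_iff] at h
    rw [EReal.coe_le_coe_iff, ← le_sub_iff_add_le', div_le_iff₀' ha]
    exact h.le

section Growth

variable {E : Type*} [NormedAddCommGroup E]

def IsIsolatedLocalMinOfOrder (f : E → EReal) (x : E) (n : ℕ) : Prop :=
  ∃ C > (0 : ℝ), ∀ᶠ y in 𝓝 x, f x + ((C * ‖y - x‖ ^ n : ℝ) : EReal) ≤ f y

lemma IsIsolatedLocalMinOfOrder.isLocalMin {f : E → EReal} {x : E} {n : ℕ}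
    (h : IsIsolatedLocalMinOfOrder f x n) : IsLocalMin f x := by
  obtain ⟨C, hC, hy⟩ := h
  filter_upwards [hy] with y hy
  exact le_trans (le_add_of_nonneg_right (EReal.coe_nonneg.2 (by positivity))) hy

variable [NormedSpace ℝ E]

def GrowsAlong (f : E → EReal) (x : E) (n : ℕ) (S : Set E) : Prop :=
  ∃ δ > (0 : ℝ), ∃ α > (0 : ℝ), ∀ t : ℝ, 0 < t → t < δ → ∀ u ∈ S,
    f x + ((α * t ^ n : ℝ) : EReal) ≤ f (x + t • u)

lemma tendsto_add_smul_nhds (x u : E) :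
    Tendsto (fun p : ℝ × E => x + p.1 • p.2) (𝓝[>] (0 : ℝ) ×ˢ 𝓝 u) (𝓝 x) := by
  have h : Tendsto (fun p : ℝ × E => x + p.1 • p.2) (𝓝 (0, u)) (𝓝 x) :=
    (by fun_prop : Continuous fun p : ℝ × E => x + p.1 • p.2).tendsto' _ _ (by simp)
  exact h.mono_left (by rw [nhds_prod_eq]; exact prod_mono nhdsWithin_le_nhds le_rfl)

namespace GrowsAlong

variable {f : E → EReal} {x : E} {m n : ℕ} {S T : Set E}

lemma empty : GrowsAlong f x n ∅ :=
  ⟨1, one_pos, 1, one_pos, fun _ _ _ _ hu => hu.elim⟩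

lemma mono (hST : S ⊆ T) (h : GrowsAlong f x n T) : GrowsAlong f x n S := by
  obtain ⟨δ, hδ, α, hα, h⟩ := h
  exact ⟨δ, hδ, α, hα, fun t ht htδ u hu => h t ht htδ u (hST hu)⟩

lemma union (hS : GrowsAlong f x n S) (hT : GrowsAlong f x n T) :
    GrowsAlong f x n (S ∪ T) := by
  obtain ⟨δ, hδ, α, hα, hS⟩ := hS
  obtain ⟨δ', hδ', α', hα', hT⟩ := hT
  refine ⟨min δ δ', lt_min hδ hδ', min α α', lt_min hα hα', fun t ht htδ u hu => ?_⟩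
  have hle : ∀ β, min α α' ≤ β → ((min α α' * t ^ n : ℝ) : EReal) ≤ ((β * t ^ n : ℝ) : EReal) :=
    fun β hβ => EReal.coe_le_coe_iff.2 (by gcongr)
  rcases hu with hu | hu
  · exact (add_le_add_right (hle α (min_le_left _ _)) _).trans
      (hS t ht (htδ.trans_le (min_le_left _ _)) u hu)
  · exact (add_le_add_right (hle α' (min_le_right _ _)) _).trans
      (hT t ht (htδ.trans_le (min_le_right _ _)) u hu)

lemma of_le (hmn : m ≤ n) (h : GrowsAlong f x m S) : GrowsAlong f x n S := by
  obtain ⟨δ, hδ, α, hα, h⟩ := h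
  refine ⟨min δ 1, lt_min hδ one_pos, α, hα, fun t ht htδ u hu => ?_⟩
  refine (add_le_add_right (EReal.coe_le_coe_iff.2 ?_) _).trans
    (h t ht (htδ.trans_le (min_le_left _ _)) u hu)
  exact mul_le_mul_of_nonneg_left
    (pow_le_pow_of_le_one ht.le (htδ.trans_le (min_le_right _ _)).le hmn) hα.le

lemma of_eventually {u : E} {α : ℝ} (hα : 0 < α)
    (h : ∀ᶠ p in 𝓝[>] (0 : ℝ) ×ˢ 𝓝 u,
      f x + ((α * p.1 ^ n : ℝ) : EReal) ≤ f (x + p.1 • p.2)) :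
    ∃ S ∈ 𝓝 u, GrowsAlong f x n S := by
  obtain ⟨A, hA, S, hS, hAS⟩ := eventually_prod_iff.1 h
  obtain ⟨δ, hδ, hδA⟩ := mem_nhdsGT_iff_exists_Ioo_subset.1 hA
  exact ⟨{u' | S u'}, hS, δ, hδ, α, hα, fun t ht htδ u' hu' => hAS (hδA ⟨ht, htδ⟩) hu'⟩

lemma isIsolatedLocalMinOfOrder (hn : n ≠ 0) (h : GrowsAlong f x n (Metric.sphere 0 1)) :
    IsIsolatedLocalMinOfOrder f x n := by
  obtain ⟨δ, hδ, α, hα, h⟩ := h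
  refine ⟨α, hα, Metric.eventually_nhds_iff_ball.2 ⟨δ, hδ, fun y hy => ?_⟩⟩
  rcases eq_or_ne y x with rfl | hyx
  · simp [zero_pow hn]
  have ht : 0 < ‖y - x‖ := norm_pos_iff.2 (sub_ne_zero.2 hyx)
  have hray : x + ‖y - x‖ • (‖y - x‖⁻¹ • (y - x)) = y := by
    rw [smul_inv_smul₀ ht.ne']
    abel
  simpa [hray] using h ‖y - x‖ ht (by simpa [dist_eq_norm] using hy) (‖y - x‖⁻¹ • (y - x))
    (by simp [norm_smul, ht.ne'])

end GrowsAlong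

lemma IsCompact.growsAlong {f : E → EReal} {x : E} {n : ℕ} {K : Set E} (hK : IsCompact K)
    (h : ∀ u ∈ K, ∃ S ∈ 𝓝 u, GrowsAlong f x n S) : GrowsAlong f x n K :=
  hK.induction_on GrowsAlong.empty (fun _ _ hST hT => hT.mono hST) (fun _ _ => .union)
    fun u hu => (h u hu).imp fun _ ⟨hS, hg⟩ => ⟨mem_nhdsWithin_of_mem_nhds hS, hg⟩

end Growth

section Hadamard

variable {E : Type*} [NormedAddCommGroup E] [InnerProductSpace ℝ E]

lemma hadamardDeriv_zero_params (f : E → EReal) (x : E) (k : ℕ) (u : E) :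
    hadamardDeriv f x k (fun _ => 0) u =
      liminf (fun p : ℝ × E =>
        (((k + 1).factorial / p.1 ^ (k + 1) : ℝ) : EReal) * (f (x + p.1 • p.2) - f x))
        (𝓝[>] (0 : ℝ) ×ˢ 𝓝 u) := by
  simp [hadamardDeriv]

lemma zero_mem_hadamardSubdiff_of_isLocalMin {f : E → EReal} {x : E} (hx : f x ≠ ⊤)
    (hx' : f x ≠ ⊥) (h : IsLocalMin f x) (k : ℕ) :
    (0 : MForm E (k + 1)) ∈ hadamardSubdiff f x k (fun _ => 0) := by
  intro u
  rw [zero_apply, EReal.coe_zero, hadamardDeriv_zero_params]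
  refine le_liminf_of_le (by isBoundedDefault) ?_
  filter_upwards [(tendsto_add_smul_nhds x u).eventually h,
    tendsto_fst.eventually self_mem_nhdsWithin] with p hmin (ht : 0 < p.1)
  exact mul_nonneg (EReal.coe_nonneg.2 (by positivity))
    ((EReal.sub_nonneg (.inr hx) (.inr hx')).2 hmin)

lemma exists_growsAlong_of_pos_hadamardDeriv {f : E → EReal} {x u : E} {k : ℕ}
    (hx : f x ≠ ⊤) (hx' : f x ≠ ⊥) (h : 0 < hadamardDeriv f x k (fun _ => 0) u) :
    ∃ S ∈ 𝓝 u, GrowsAlong f x (k + 1) S := by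
  obtain ⟨c, hc, hcd⟩ := EReal.lt_iff_exists_real_btwn.1 h
  rw [hadamardDeriv_zero_params] at hcd
  have hfac : (0 : ℝ) < (k + 1).factorial := by positivity
  refine GrowsAlong.of_eventually (α := c / (k + 1).factorial) (div_pos (EReal.coe_pos.1 hc) hfac) ?_
  filter_upwards [eventually_lt_of_lt_liminf hcd, tendsto_fst.eventually self_mem_nhdsWithin]
    with p hp (ht : 0 < p.1)
  have hpow : (0 : ℝ) < p.1 ^ (k + 1) := pow_pos ht _
  have hgrow := EReal.coe_add_div_le_of_lt_mul_sub (r := (f x).toReal) (by positivity)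
    (EReal.coe_toReal hx hx' ▸ hp)
  rw [EReal.coe_add, EReal.coe_toReal hx hx'] at hgrow
  convert hgrow using 4
  field_simp

lemma MemClassF.exists_growsAlong {f : E → EReal} {x u : E} {n : ℕ} (hF : MemClassF f n x)
    (hx : f x ≠ ⊥) (hu : ‖u‖ = 1)
    (H : ∀ j : ℕ, j + 2 ≤ n → (0 : MForm E (j + 1)) ∈ hadamardSubdiff f x j (fun _ => 0)) :
    ∃ S ∈ 𝓝 u, GrowsAlong f x n S := by
  by_cases hzero : ∀ j : ℕ, j + 2 ≤ n → hadamardDeriv f x j (fun _ => 0) u = 0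
  · obtain ⟨ε, hε, δ, hδ, α, hα, hgrow⟩ := hF.2 u hu (fun j hj => H j (by omega)) hzero
    exact ⟨Metric.ball u ε, Metric.ball_mem_nhds u hε, δ, hδ, α, hα,
      fun t ht htδ u' hu' => hgrow t u' ht.le htδ (mem_ball_iff_norm.1 hu')⟩
  push Not at hzero
  obtain ⟨j, hj, hne⟩ := hzero
  have hpos : 0 < hadamardDeriv f x j (fun _ => 0) u :=
    (by simpa using H j hj u : (0 : EReal) ≤ _).lt_of_ne' hne
  obtain ⟨S, hS, hg⟩ := exists_growsAlong_of_pos_hadamardDeriv hF.1 hx hpos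
  exact ⟨S, hS, hg.of_le (by omega)⟩

end Hadamard

/-- for `n ≥ 2` and `f ∈ 𝓕_n (xbar)`, `xbar` is an isolated local minimizer
of order `n` iff `0 ∈ ∂₋¹ f xbar` and `0 ∈ ∂₋ⁱ f (xbar; 0, …, 0)` for `i = 2, …, n - 1`. -/
theorem stmt_17 {E : Type*} [NormedAddCommGroup E] [InnerProductSpace ℝ E]
    [FiniteDimensional ℝ E] (f : E → EReal)
    (hbot : ∀ y, f y ≠ ⊥) (xbar : E) (n : ℕ) (hn : 2 ≤ n)
    (hF : MemClassF f n xbar) :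
    (∃ C > (0 : ℝ), ∀ᶠ y in 𝓝 xbar,
        f xbar + ((C * ‖y - xbar‖ ^ n : ℝ) : EReal) ≤ f y) ↔
      ∀ j : ℕ, j + 2 ≤ n →
        (0 : MForm E (j + 1)) ∈ hadamardSubdiff f xbar j (fun _ => 0) := by
  constructor
  · intro hmin j _
    exact zero_mem_hadamardSubdiff_of_isLocalMin hF.1 (hbot xbar)
      (IsIsolatedLocalMinOfOrder.isLocalMin hmin) j
  · intro H
    refine GrowsAlong.isIsolatedLocalMinOfOrder (by omega) ((isCompact_sphere 0 1).growsAlong ?_)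
    intro u hu
    exact hF.exists_growsAlong (hbot xbar) (mem_sphere_zero_iff_norm.1 hu) H
end
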